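/- arXiv:0807.0614 — 4 statements merged into one kernel-verified Lean document; each statement's English description precedes it below -/
import Mathlib

section
/- Let N be a nonlinear connection on E with almost product structure ℙ. The Nijenhuis tensor 𝒩_ℙ vanishes identically (i.e. 𝒩_ℙ(X,Y) = 0 for all smooth vector fields X, Y on E) if and only if the three d-tensors R^{(a)}_{(i)bc}, R^{(a)}_{(i)bk}, R^{(a)}_{(i)jk} vanish identically on E; that is, ℙ is integrable if and only if the horizontal distribution of N is integrable. -/
noncomputable section

open scoped BigOperators

/-- The local model of the dual 1-jet bundle: `(t, x, p)` with `p : Fin m → Fin n → ℝ`,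
`p a i = p_i^a`.  The tangent space at any point is identified with the same product. -/
abbrev E (m n : ℕ) : Type := (Fin m → ℝ) × (Fin n → ℝ) × (Fin m → Fin n → ℝ)

/-- The natural frame vector `∂/∂t^a`. -/
def dTnat (m n : ℕ) (a : Fin m) : E m n := (Pi.single a 1, 0, 0)

/-- The natural frame vector `∂/∂x^i`. -/
def dXnat (m n : ℕ) (i : Fin n) : E m n := (0, Pi.single i 1, 0)

/-- The natural (vertical) frame vector `∂/∂p_i^a`. -/
def dPnat (m n : ℕ) (a : Fin m) (i : Fin n) : E m n := (0, 0, Pi.single a (Pi.single i 1))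

/-- A nonlinear connection: coefficient families `N1 a i b = N1^{(a)}_{(i)b}` and
`N2 a i j = N2^{(a)}_{(i)j}`. -/
structure NLC (m n : ℕ) where
  N1 : Fin m → Fin n → Fin m → E m n → ℝ
  N2 : Fin m → Fin n → Fin n → E m n → ℝ

variable {m n : ℕ}

/-- Adapted frame vector field `δ/δt^b`. -/
def NLC.dT (N : NLC m n) (b : Fin m) : E m n → E m n :=
  fun u => (Pi.single b 1, 0, fun a i => -(N.N1 a i b u))

/-- Adapted frame vector field `δ/δx^j`. -/
def NLC.dX (N : NLC m n) (j : Fin n) : E m n → E m n :=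
  fun u => (0, Pi.single j 1, fun a i => -(N.N2 a i j u))

/-- The constant vertical frame vector field `∂/∂p_k^c`. -/
def dPfield (m n : ℕ) (c : Fin m) (k : Fin n) : E m n → E m n := fun _ => dPnat m n c k

/-- Lie bracket of vector fields on the model. -/
def lie (X Y : E m n → E m n) : E m n → E m n :=
  fun u => fderiv ℝ Y u (X u) - fderiv ℝ X u (Y u)

/-- The `δ/δt^c`-derivative of a function. -/
def NLC.delT (N : NLC m n) (c : Fin m) (f : E m n → ℝ) (u : E m n) : ℝ :=
  fderiv ℝ f u (N.dT c u)

/-- The `δ/δx^k`-derivative of a function. -/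
def NLC.delX (N : NLC m n) (k : Fin n) (f : E m n → ℝ) (u : E m n) : ℝ :=
  fderiv ℝ f u (N.dX k u)

/-- The `∂/∂p_k^c`-derivative of a function. -/
def delP (c : Fin m) (k : Fin n) (f : E m n → ℝ) (u : E m n) : ℝ :=
  fderiv ℝ f u (dPnat m n c k)

/-- `R^{(a)}_{(i)bc}`. -/
def NLC.R1 (N : NLC m n) (a : Fin m) (i : Fin n) (b c : Fin m) (u : E m n) : ℝ :=
  N.delT c (N.N1 a i b) u - N.delT b (N.N1 a i c) u

/-- `R^{(a)}_{(i)bk}`. -/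
def NLC.Rmix (N : NLC m n) (a : Fin m) (i : Fin n) (b : Fin m) (k : Fin n) (u : E m n) : ℝ :=
  N.delX k (N.N1 a i b) u - N.delT b (N.N2 a i k) u

/-- `R^{(a)}_{(i)jk}`. -/
def NLC.R2 (N : NLC m n) (a : Fin m) (i j k : Fin n) (u : E m n) : ℝ :=
  N.delX k (N.N2 a i j) u - N.delX j (N.N2 a i k) u

/-- `B^{(a)(k)}_{(i)b(c)} = ∂N1^{(a)}_{(i)b}/∂p_k^c`. -/
def NLC.B1 (N : NLC m n) (a : Fin m) (i : Fin n) (b c : Fin m) (k : Fin n) (u : E m n) : ℝ :=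
  delP c k (N.N1 a i b) u

/-- `B^{(a)(k)}_{(i)j(c)} = ∂N2^{(a)}_{(i)j}/∂p_k^c`. -/
def NLC.B2 (N : NLC m n) (a : Fin m) (i j : Fin n) (c : Fin m) (k : Fin n) (u : E m n) : ℝ :=
  delP c k (N.N2 a i j) u

/-- Smoothness of the coefficients of a nonlinear connection on a set. -/
def NLC.SmoothOn (N : NLC m n) (O : Set (E m n)) : Prop :=
  (∀ a i b, ContDiffOn ℝ (⊤ : ℕ∞) (N.N1 a i b) O) ∧ (∀ a i j, ContDiffOn ℝ (⊤ : ℕ∞) (N.N2 a i j) O)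

/-- The open set `U × V × P` of the model. -/
def modelSet (U : Set (Fin m → ℝ)) (V : Set (Fin n → ℝ)) : Set (E m n) :=
  U ×ˢ (V ×ˢ (Set.univ : Set (Fin m → Fin n → ℝ)))

/-- Jacobian matrix entry `(Jac f t) b a = ∂f^b/∂t^a`. -/
def Jac {k : ℕ} (f : (Fin k → ℝ) → (Fin k → ℝ)) (t : Fin k → ℝ) (b a : Fin k) : ℝ :=
  fderiv ℝ f t (Pi.single a 1) b

/-- A jet coordinate change: smooth diffeomorphisms `φ : U → U'` and `ψ : V → V'`. -/
structure JetChange (m n : ℕ) where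
  U : Set (Fin m → ℝ)
  U' : Set (Fin m → ℝ)
  V : Set (Fin n → ℝ)
  V' : Set (Fin n → ℝ)
  hUopen : IsOpen U
  hU'open : IsOpen U'
  hVopen : IsOpen V
  hV'open : IsOpen V'
  φ : (Fin m → ℝ) → (Fin m → ℝ)
  φi : (Fin m → ℝ) → (Fin m → ℝ)
  ψ : (Fin n → ℝ) → (Fin n → ℝ)
  ψi : (Fin n → ℝ) → (Fin n → ℝ)
  hφ : ContDiffOn ℝ (⊤ : ℕ∞) φ U
  hφi : ContDiffOn ℝ (⊤ : ℕ∞) φi U'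
  hψ : ContDiffOn ℝ (⊤ : ℕ∞) ψ V
  hψi : ContDiffOn ℝ (⊤ : ℕ∞) ψi V'
  hφmaps : Set.MapsTo φ U U'
  hφimaps : Set.MapsTo φi U' U
  hψmaps : Set.MapsTo ψ V V'
  hψimaps : Set.MapsTo ψi V' V
  hφleft : ∀ t ∈ U, φi (φ t) = t
  hφright : ∀ s ∈ U', φ (φi s) = s
  hψleft : ∀ x ∈ V, ψi (ψ x) = x
  hψright : ∀ y ∈ V', ψ (ψi y) = y

/-- The source domain `U × V × P` of a jet change. -/
def JetChange.src (C : JetChange m n) : Set (E m n) := modelSet C.U C.V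

/-- The induced map `Φ` on the dual 1-jet space:
`p̃_j^b = (∂t̃^b/∂t^c)(∂x^k/∂x̃^j) p_k^c`. -/
def JetChange.Φ (C : JetChange m n) : E m n → E m n :=
  fun u => (C.φ u.1, C.ψ u.2.1,
    fun b j => ∑ c, ∑ k, Jac C.φ u.1 b c * Jac C.ψi (C.ψ u.2.1) k j * u.2.2 c k)

/-- The transformation rule (7) for nonlinear connections under a jet change. -/
def JetChange.Rule7 (C : JetChange m n) (N N' : NLC m n) : Prop :=
  ∀ u ∈ C.src,
    (∀ b j a,
      ∑ c, N'.N1 b j c (C.Φ u) * Jac C.φ u.1 c a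
        = (∑ c, ∑ k, N.N1 c k a u * Jac C.φ u.1 b c * Jac C.ψi (C.ψ u.2.1) k j)
          - fderiv ℝ (fun v => (C.Φ v).2.2 b j) u (dTnat m n a))
    ∧ (∀ b j i,
      ∑ k, N'.N2 b j k (C.Φ u) * Jac C.ψ u.2.1 k i
        = (∑ c, ∑ k, N.N2 c k i u * Jac C.φ u.1 b c * Jac C.ψi (C.ψ u.2.1) k j)
          - fderiv ℝ (fun v => (C.Φ v).2.2 b j) u (dXnat m n i))

/-- The adapted 1-form `δp_i^a` evaluated at `u` on a tangent vector `ξ`. -/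
def delPform (N : NLC m n) (a : Fin m) (i : Fin n) (u : E m n) (ξ : E m n) : ℝ :=
  ξ.2.2 a i + (∑ b, N.N1 a i b u * ξ.1 b) + (∑ j, N.N2 a i j u * ξ.2.1 j)

/-- The `T`-horizontal subspace at `u`. -/
def NLC.HT (N : NLC m n) (u : E m n) : Submodule ℝ (E m n) :=
  Submodule.span ℝ (Set.range fun a => N.dT a u)

/-- The `M`-horizontal subspace at `u`. -/
def NLC.HM (N : NLC m n) (u : E m n) : Submodule ℝ (E m n) :=
  Submodule.span ℝ (Set.range fun i => N.dX i u)

/-- The vertical subspace. -/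
def Vert (m n : ℕ) : Submodule ℝ (E m n) :=
  Submodule.span ℝ (Set.range fun ai : Fin m × Fin n => dPnat m n ai.1 ai.2)

/-- The horizontal subspace at `u`. -/
def NLC.Hor (N : NLC m n) (u : E m n) : Submodule ℝ (E m n) :=
  Submodule.span ℝ ((Set.range fun a => N.dT a u) ∪ (Set.range fun i => N.dX i u))

/-- Pointwise `T`-horizontal projection. -/
def NLC.hT (N : NLC m n) (u : E m n) (ξ : E m n) : E m n :=
  (ξ.1, 0, fun a i => -∑ b, N.N1 a i b u * ξ.1 b)

/-- Pointwise `M`-horizontal projection. -/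
def NLC.hM (N : NLC m n) (u : E m n) (ξ : E m n) : E m n :=
  (0, ξ.2.1, fun a i => -∑ j, N.N2 a i j u * ξ.2.1 j)

/-- Pointwise vertical projection. -/
def NLC.w (N : NLC m n) (u : E m n) (ξ : E m n) : E m n :=
  (0, 0, fun a i => ξ.2.2 a i + (∑ b, N.N1 a i b u * ξ.1 b) + (∑ j, N.N2 a i j u * ξ.2.1 j))

/-- The almost product structure `ℙ = h_T + h_M − w` of a nonlinear connection, pointwise. -/
def NLC.apP (N : NLC m n) (u : E m n) (ξ : E m n) : E m n :=
  (ξ.1, ξ.2.1, fun a i =>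
    -(ξ.2.2 a i) - 2 * (∑ b, N.N1 a i b u * ξ.1 b) - 2 * (∑ j, N.N2 a i j u * ξ.2.1 j))

/-- `h_T` applied to a vector field. -/
def NLC.hTF (N : NLC m n) (X : E m n → E m n) : E m n → E m n := fun u => N.hT u (X u)

/-- `h_M` applied to a vector field. -/
def NLC.hMF (N : NLC m n) (X : E m n → E m n) : E m n → E m n := fun u => N.hM u (X u)

/-- `w` applied to a vector field. -/
def NLC.wF (N : NLC m n) (X : E m n → E m n) : E m n → E m n := fun u => N.w u (X u)

/-- `ℙ` applied to a vector field. -/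
def NLC.PF (N : NLC m n) (X : E m n → E m n) : E m n → E m n := fun u => N.apP u (X u)

/-- The Nijenhuis tensor of the almost product structure `ℙ`. -/
def Nij (N : NLC m n) (X Y : E m n → E m n) : E m n → E m n :=
  fun u => N.PF (N.PF (lie X Y)) u + lie (N.PF X) (N.PF Y) u
    - N.PF (lie (N.PF X) Y) u - N.PF (lie X (N.PF Y)) u

/-- An `N`-linear connection: the nine adapted coefficient families.
Index conventions: `A1 a b c = A^a_{bc}`, `A2 i j c = A^i_{jc}`,
`A3 a i b j c = A^{(a)(j)}_{(i)(b)c}`, `H1 a b k = H^a_{bk}`, `H2 i j k = H^i_{jk}`,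
`H3 a i b j k = H^{(a)(j)}_{(i)(b)k}`, `C1 a b c k = C^{a(k)}_{b(c)}`,
`C2 i j c k = C^{i(k)}_{j(c)}`, `C3 a i b j c k = C^{(a)(j)(k)}_{(i)(b)(c)}`. -/
structure NLinConn (m n : ℕ) where
  A1 : Fin m → Fin m → Fin m → E m n → ℝ
  A2 : Fin n → Fin n → Fin m → E m n → ℝ
  A3 : Fin m → Fin n → Fin m → Fin n → Fin m → E m n → ℝ
  H1 : Fin m → Fin m → Fin n → E m n → ℝ
  H2 : Fin n → Fin n → Fin n → E m n → ℝ
  H3 : Fin m → Fin n → Fin m → Fin n → Fin n → E m n → ℝ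
  C1 : Fin m → Fin m → Fin m → Fin n → E m n → ℝ
  C2 : Fin n → Fin n → Fin m → Fin n → E m n → ℝ
  C3 : Fin m → Fin n → Fin m → Fin n → Fin m → Fin n → E m n → ℝ

/-- Smoothness of the coefficients of an `N`-linear connection on a set. -/
def NLinConn.SmoothOn (D : NLinConn m n) (O : Set (E m n)) : Prop :=
  (∀ a b c, ContDiffOn ℝ (⊤ : ℕ∞) (D.A1 a b c) O) ∧ (∀ i j c, ContDiffOn ℝ (⊤ : ℕ∞) (D.A2 i j c) O) ∧
  (∀ a i b j c, ContDiffOn ℝ (⊤ : ℕ∞) (D.A3 a i b j c) O) ∧ (∀ a b k, ContDiffOn ℝ (⊤ : ℕ∞) (D.H1 a b k) O) ∧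
  (∀ i j k, ContDiffOn ℝ (⊤ : ℕ∞) (D.H2 i j k) O) ∧ (∀ a i b j k, ContDiffOn ℝ (⊤ : ℕ∞) (D.H3 a i b j k) O) ∧
  (∀ a b c k, ContDiffOn ℝ (⊤ : ℕ∞) (D.C1 a b c k) O) ∧ (∀ i j c k, ContDiffOn ℝ (⊤ : ℕ∞) (D.C2 i j c k) O) ∧
  (∀ a i b j c k, ContDiffOn ℝ (⊤ : ℕ∞) (D.C3 a i b j c k) O)

/-- Adapted `t`-component of a vector field. -/
def compT (X : E m n → E m n) (a : Fin m) (u : E m n) : ℝ := (X u).1 a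

/-- Adapted `x`-component of a vector field. -/
def compX (X : E m n → E m n) (i : Fin n) (u : E m n) : ℝ := (X u).2.1 i

/-- Adapted vertical component of a vector field. -/
def compP (N : NLC m n) (X : E m n → E m n) (a : Fin m) (i : Fin n) (u : E m n) : ℝ :=
  (X u).2.2 a i + (∑ b, N.N1 a i b u * (X u).1 b) + (∑ j, N.N2 a i j u * (X u).2.1 j)

/-- Reconstruct a tangent vector from its adapted components. -/
def fromA (N : NLC m n) (ft : Fin m → ℝ) (fx : Fin n → ℝ) (fp : Fin m → Fin n → ℝ)
    (u : E m n) : E m n :=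
  (ft, fx, fun a i => fp a i - (∑ b, N.N1 a i b u * ft b) - (∑ j, N.N2 a i j u * fx j))

/-- Covariant derivative `D_{δ/δt^c} Y`. -/
def covT (N : NLC m n) (D : NLinConn m n) (c : Fin m) (Y : E m n → E m n) : E m n → E m n :=
  fun u => fromA N
    (fun a => N.delT c (compT Y a) u + ∑ b, compT Y b u * D.A1 a b c u)
    (fun i => N.delT c (compX Y i) u + ∑ j, compX Y j u * D.A2 i j c u)
    (fun a i => N.delT c (compP N Y a i) u - ∑ b, ∑ j, compP N Y b j u * D.A3 a i b j c u)
    u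

/-- Covariant derivative `D_{δ/δx^k} Y`. -/
def covX (N : NLC m n) (D : NLinConn m n) (k : Fin n) (Y : E m n → E m n) : E m n → E m n :=
  fun u => fromA N
    (fun a => N.delX k (compT Y a) u + ∑ b, compT Y b u * D.H1 a b k u)
    (fun i => N.delX k (compX Y i) u + ∑ j, compX Y j u * D.H2 i j k u)
    (fun a i => N.delX k (compP N Y a i) u - ∑ b, ∑ j, compP N Y b j u * D.H3 a i b j k u)
    u

/-- Covariant derivative `D_{∂/∂p_k^c} Y`. -/
def covP (N : NLC m n) (D : NLinConn m n) (c : Fin m) (k : Fin n) (Y : E m n → E m n) :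
    E m n → E m n :=
  fun u => fromA N
    (fun a => delP c k (compT Y a) u + ∑ b, compT Y b u * D.C1 a b c k u)
    (fun i => delP c k (compX Y i) u + ∑ j, compX Y j u * D.C2 i j c k u)
    (fun a i => delP c k (compP N Y a i) u - ∑ b, ∑ j, compP N Y b j u * D.C3 a i b j c k u)
    u

/-- Covariant derivative `D_X Y` of an `N`-linear connection. -/
def covD (N : NLC m n) (D : NLinConn m n) (X Y : E m n → E m n) : E m n → E m n :=
  fun u => (∑ c, compT X c u • covT N D c Y u) + (∑ k, compX X k u • covX N D k Y u)
    + ∑ c, ∑ k, compP N X c k u • covP N D c k Y u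

/-- Torsion of an `N`-linear connection. -/
def tors (N : NLC m n) (D : NLinConn m n) (X Y : E m n → E m n) : E m n → E m n :=
  fun u => covD N D X Y u - covD N D Y X u - lie X Y u

/-- Curvature of an `N`-linear connection. -/
def curvR (N : NLC m n) (D : NLinConn m n) (X Y Z : E m n → E m n) : E m n → E m n :=
  fun u => covD N D X (covD N D Y Z) u - covD N D Y (covD N D X Z) u
    - covD N D (lie X Y) Z u

/-- The Berwald nonlinear connection associated to linear connections `χ`, `Γ`. -/
def berN (χ : Fin m → Fin m → Fin m → (Fin m → ℝ) → ℝ)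
    (Γ : Fin n → Fin n → Fin n → (Fin n → ℝ) → ℝ) : NLC m n where
  N1 := fun a i b u => ∑ c, χ a c b u.1 * u.2.2 c i
  N2 := fun a i j u => -∑ k, Γ k i j u.2.1 * u.2.2 a k

/-- The Berwald `N`-linear connection associated to linear connections `χ`, `Γ`. -/
def berD (χ : Fin m → Fin m → Fin m → (Fin m → ℝ) → ℝ)
    (Γ : Fin n → Fin n → Fin n → (Fin n → ℝ) → ℝ) : NLinConn m n where
  A1 := fun a b c u => χ a b c u.1
  A2 := fun _ _ _ _ => 0
  A3 := fun a i b j c u => -((if j = i then (1 : ℝ) else 0) * χ a b c u.1)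
  H1 := fun _ _ _ _ => 0
  H2 := fun i j k u => Γ i j k u.2.1
  H3 := fun a i b j k u => (if a = b then (1 : ℝ) else 0) * Γ j i k u.2.1
  C1 := fun _ _ _ _ _ => 0
  C2 := fun _ _ _ _ _ => 0
  C3 := fun _ _ _ _ _ _ _ => 0

/-- Curvature tensor `κ^f_{gab}` of a linear connection `χ` on `U`. -/
def kapC (χ : Fin m → Fin m → Fin m → (Fin m → ℝ) → ℝ) (f g a b : Fin m)
    (t : Fin m → ℝ) : ℝ :=
  fderiv ℝ (χ f g a) t (Pi.single b 1) - fderiv ℝ (χ f g b) t (Pi.single a 1)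
    + (∑ e, χ e g a t * χ f e b t) - ∑ e, χ e g b t * χ f e a t

/-- Curvature tensor `𝐫^s_{rij}` of a linear connection `Γ` on `V`. -/
def rC (Γ : Fin n → Fin n → Fin n → (Fin n → ℝ) → ℝ) (s r i j : Fin n)
    (x : Fin n → ℝ) : ℝ :=
  fderiv ℝ (Γ s r i) x (Pi.single j 1) - fderiv ℝ (Γ s r j) x (Pi.single i 1)
    + (∑ l, Γ l r i x * Γ s l j x) - ∑ l, Γ l r j x * Γ s l i x

end
section Helpers
open scoped BigOperators
variable {m n : ℕ}

lemma fd_comp1 {F : E m n → E m n} {u : E m n} (hF : DifferentiableAt ℝ F u)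
    (b : Fin m) (v : E m n) :
    fderiv ℝ (fun w => (F w).1 b) u v = (fderiv ℝ F u v).1 b := by
  set L := ((ContinuousLinearMap.proj b).comp
      (ContinuousLinearMap.fst ℝ (Fin m → ℝ) ((Fin n → ℝ) × (Fin m → Fin n → ℝ)))) with hL
  have h := (L.hasFDerivAt (x := F u)).comp u hF.hasFDerivAt
  have hfun : (fun w => (F w).1 b) = ⇑L ∘ F := rfl
  rw [hfun, h.fderiv]
  rfl

lemma fd_comp2 {F : E m n → E m n} {u : E m n} (hF : DifferentiableAt ℝ F u)
    (j : Fin n) (v : E m n) :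
    fderiv ℝ (fun w => (F w).2.1 j) u v = (fderiv ℝ F u v).2.1 j := by
  set L := ((ContinuousLinearMap.proj j).comp
      ((ContinuousLinearMap.fst ℝ (Fin n → ℝ) (Fin m → Fin n → ℝ)).comp
        (ContinuousLinearMap.snd ℝ (Fin m → ℝ) ((Fin n → ℝ) × (Fin m → Fin n → ℝ))))) with hL
  have h := (L.hasFDerivAt (x := F u)).comp u hF.hasFDerivAt
  have hfun : (fun w => (F w).2.1 j) = ⇑L ∘ F := rfl
  rw [hfun, h.fderiv]
  rfl

lemma fd_comp3 {F : E m n → E m n} {u : E m n} (hF : DifferentiableAt ℝ F u)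
    (a : Fin m) (i : Fin n) (v : E m n) :
    fderiv ℝ (fun w => (F w).2.2 a i) u v = (fderiv ℝ F u v).2.2 a i := by
  set L := (((ContinuousLinearMap.proj i).comp (ContinuousLinearMap.proj a)).comp
      ((ContinuousLinearMap.snd ℝ (Fin n → ℝ) (Fin m → Fin n → ℝ)).comp
        (ContinuousLinearMap.snd ℝ (Fin m → ℝ) ((Fin n → ℝ) × (Fin m → Fin n → ℝ))))) with hL
  have h := (L.hasFDerivAt (x := F u)).comp u hF.hasFDerivAt
  have hfun : (fun w => (F w).2.2 a i) = ⇑L ∘ F := rfl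
  rw [hfun, h.fderiv]
  rfl

end Helpers
section Helpers2
open scoped BigOperators
variable {m n : ℕ}

lemma diff_c1 {X : E m n → E m n} {u : E m n} (hX : DifferentiableAt ℝ X u) (b : Fin m) :
    DifferentiableAt ℝ (fun w => (X w).1 b) u :=
  (differentiableAt_pi.mp hX.fst) b

lemma diff_c2 {X : E m n → E m n} {u : E m n} (hX : DifferentiableAt ℝ X u) (j : Fin n) :
    DifferentiableAt ℝ (fun w => (X w).2.1 j) u :=
  (differentiableAt_pi.mp hX.snd.fst) j

lemma diff_c3 {X : E m n → E m n} {u : E m n} (hX : DifferentiableAt ℝ X u) (a : Fin m)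
    (i : Fin n) : DifferentiableAt ℝ (fun w => (X w).2.2 a i) u :=
  (differentiableAt_pi.mp ((differentiableAt_pi.mp hX.snd.snd) a)) i

lemma diff_PF (N : NLC m n) {X : E m n → E m n} {u : E m n}
    (hX : DifferentiableAt ℝ X u)
    (h1 : ∀ a i b, DifferentiableAt ℝ (N.N1 a i b) u)
    (h2 : ∀ a i j, DifferentiableAt ℝ (N.N2 a i j) u) :
    DifferentiableAt ℝ (N.PF X) u := by
  refine DifferentiableAt.prodMk hX.fst (DifferentiableAt.prodMk hX.snd.fst ?_)
  refine differentiableAt_pi.mpr fun a => differentiableAt_pi.mpr fun i => ?_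
  exact ((diff_c3 hX a i).neg.sub
      ((DifferentiableAt.fun_sum fun b _ => (h1 a i b).mul (diff_c1 hX b)).const_mul 2)).sub
      ((DifferentiableAt.fun_sum fun j _ => (h2 a i j).mul (diff_c2 hX j)).const_mul 2)

lemma fd_PF3 (N : NLC m n) {X : E m n → E m n} {u : E m n}
    (hX : DifferentiableAt ℝ X u)
    (h1 : ∀ a i b, DifferentiableAt ℝ (N.N1 a i b) u)
    (h2 : ∀ a i j, DifferentiableAt ℝ (N.N2 a i j) u)
    (a : Fin m) (i : Fin n) (v : E m n) :
    fderiv ℝ (fun w => (N.PF X w).2.2 a i) u v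
      = -(fderiv ℝ (fun w => (X w).2.2 a i) u v)
        - 2 * (∑ b, (N.N1 a i b u * fderiv ℝ (fun w => (X w).1 b) u v
            + (X u).1 b * fderiv ℝ (N.N1 a i b) u v))
        - 2 * (∑ j, (N.N2 a i j u * fderiv ℝ (fun w => (X w).2.1 j) u v
            + (X u).2.1 j * fderiv ℝ (N.N2 a i j) u v)) := by
  have h : HasFDerivAt (fun w => (N.PF X w).2.2 a i)
      (-(fderiv ℝ (fun w => (X w).2.2 a i) u)
        - (2:ℝ) • (∑ b, (N.N1 a i b u • fderiv ℝ (fun w => (X w).1 b) u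
            + (X u).1 b • fderiv ℝ (N.N1 a i b) u))
        - (2:ℝ) • (∑ j, (N.N2 a i j u • fderiv ℝ (fun w => (X w).2.1 j) u
            + (X u).2.1 j • fderiv ℝ (N.N2 a i j) u))) u := by
    show HasFDerivAt (fun w => -((X w).2.2 a i)
        - 2 * (∑ b, N.N1 a i b w * (X w).1 b)
        - 2 * (∑ j, N.N2 a i j w * (X w).2.1 j)) _ u
    exact (((diff_c3 hX a i).hasFDerivAt.neg).sub
        ((HasFDerivAt.fun_sum fun b _ =>
          (h1 a i b).hasFDerivAt.mul (diff_c1 hX b).hasFDerivAt).const_mul 2)).sub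
        ((HasFDerivAt.fun_sum fun j _ =>
          (h2 a i j).hasFDerivAt.mul (diff_c2 hX j).hasFDerivAt).const_mul 2)
  rw [h.fderiv]
  simp [ContinuousLinearMap.sum_apply, Finset.mul_sum, smul_eq_mul]

end Helpers2
section Helpers3
open scoped BigOperators
variable {m n : ℕ}

lemma apP_apP (N : NLC m n) (u ξ : E m n) : N.apP u (N.apP u ξ) = ξ := by
  refine Prod.ext rfl (Prod.ext rfl ?_)
  funext a i
  simp only [NLC.apP]
  ring

lemma apP_add (N : NLC m n) (u ξ : E m n) :
    N.apP u ξ + ξ = (∑ c, (2 * ξ.1 c) • N.dT c u) + ∑ k, (2 * ξ.2.1 k) • N.dX k u := by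
  refine Prod.ext ?_ (Prod.ext ?_ ?_)
  · funext b
    simp [NLC.apP, NLC.dT, NLC.dX, Prod.fst_sum, Finset.sum_apply, Pi.single_apply, mul_ite,
      Finset.sum_ite_eq']
    ring
  · funext j
    simp [NLC.apP, NLC.dT, NLC.dX, Prod.snd_sum, Prod.fst_sum, Finset.sum_apply,
      Pi.single_apply, mul_ite, Finset.sum_ite_eq']
    ring
  · funext a i
    simp [NLC.apP, NLC.dT, NLC.dX, Prod.snd_sum, Finset.sum_apply, Finset.mul_sum]
    have e1 : ∑ c, 2 * (N.N1 a i c u * ξ.1 c) = ∑ c, 2 * ξ.1 c * N.N1 a i c u :=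
      Finset.sum_congr rfl fun _ _ => by ring
    have e2 : ∑ k, 2 * (N.N2 a i k u * ξ.2.1 k) = ∑ k, 2 * ξ.2.1 k * N.N2 a i k u :=
      Finset.sum_congr rfl fun _ _ => by ring
    rw [e1, e2]; ring

lemma fd_split (N : NLC m n) (g : E m n → ℝ) (u ξ : E m n) :
    fderiv ℝ g u (N.apP u ξ) + fderiv ℝ g u ξ
      = (∑ c, 2 * ξ.1 c * fderiv ℝ g u (N.dT c u))
        + ∑ k, 2 * ξ.2.1 k * fderiv ℝ g u (N.dX k u) := by
  rw [← map_add, apP_add]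
  simp [map_sum, smul_eq_mul, mul_assoc]

end Helpers3
section Helpers4
open scoped BigOperators
variable {m n : ℕ}

lemma swap2 {ι κ : Type*} [Fintype ι] [Fintype κ] (f : ι → κ → ℝ) (g : κ → ι → ℝ)
    (h : ∀ b c, f b c = g c b) : (∑ b, ∑ c, f b c) = ∑ c, ∑ b, g c b := by
  rw [Finset.sum_comm]
  exact Finset.sum_congr rfl fun c _ => Finset.sum_congr rfl fun b _ => h b c

lemma pull2 {ι κ : Type*} [Fintype ι] [Fintype κ] (f : ι → κ → ℝ) :
    (∑ b, ∑ c, 2 * f b c) = 2 * ∑ b, ∑ c, f b c := by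
  rw [Finset.mul_sum]
  exact Finset.sum_congr rfl fun b _ => (Finset.mul_sum _ _ _).symm

lemma Bgen {ι κ1 κ2 : Type*} [Fintype ι] [Fintype κ1] [Fintype κ2]
    (r da dx : ι → ℝ) (p1 : κ1 → ℝ) (p2 : κ2 → ℝ) (q1 : ι → κ1 → ℝ) (q2 : ι → κ2 → ℝ)
    (hs : ∀ b, da b + dx b = (∑ c, 2 * p1 c * q1 b c) + ∑ k, 2 * p2 k * q2 b k) :
    (∑ b, r b * da b) + (∑ b, r b * dx b)
      = 2 * (∑ b, ∑ c, p1 c * r b * q1 b c) + 2 * (∑ b, ∑ k, p2 k * r b * q2 b k) := by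
  rw [← pull2, ← pull2, ← Finset.sum_add_distrib, ← Finset.sum_add_distrib]
  refine Finset.sum_congr rfl fun b _ => ?_
  rw [← mul_add, hs b, mul_add, Finset.mul_sum, Finset.mul_sum]
  exact congrArg₂ (· + ·) (Finset.sum_congr rfl fun c _ => by ring)
    (Finset.sum_congr rfl fun k _ => by ring)

lemma scalar_master
    (N1 x1 y1 Yx1 Ya1 Xy1 Xa1 d1x d1ax d1y d1ay : Fin m → ℝ)
    (N2 x2 y2 Yx2 Ya2 Xy2 Xa2 d2x d2ax d2y d2ay : Fin n → ℝ)
    (Yx3 Xy3 Ya3 Xa3 : ℝ)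
    (dT1 : Fin m → Fin m → ℝ) (dX1 : Fin m → Fin n → ℝ)
    (dT2 : Fin n → Fin m → ℝ) (dX2 : Fin n → Fin n → ℝ)
    (hs1x : ∀ b, d1ax b + d1x b = (∑ c, 2 * x1 c * dT1 b c) + ∑ k, 2 * x2 k * dX1 b k)
    (hs1y : ∀ b, d1ay b + d1y b = (∑ c, 2 * y1 c * dT1 b c) + ∑ k, 2 * y2 k * dX1 b k)
    (hs2x : ∀ j, d2ax j + d2x j = (∑ c, 2 * x1 c * dT2 j c) + ∑ k, 2 * x2 k * dX2 j k)
    (hs2y : ∀ j, d2ay j + d2y j = (∑ c, 2 * y1 c * dT2 j c) + ∑ k, 2 * y2 k * dX2 j k) :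
    (Yx3 - Xy3)
    + ((-Ya3 - 2 * (∑ b, (N1 b * Ya1 b + y1 b * d1ax b))
          - 2 * (∑ j, (N2 j * Ya2 j + y2 j * d2ax j)))
       - (-Xa3 - 2 * (∑ b, (N1 b * Xa1 b + x1 b * d1ay b))
          - 2 * (∑ j, (N2 j * Xa2 j + x2 j * d2ay j))))
    - (-(Ya3 - (-Xy3 - 2 * (∑ b, (N1 b * Xy1 b + x1 b * d1y b))
          - 2 * (∑ j, (N2 j * Xy2 j + x2 j * d2y j))))
       - 2 * (∑ b, N1 b * (Ya1 b - Xy1 b)) - 2 * (∑ j, N2 j * (Ya2 j - Xy2 j)))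
    - (-((-Yx3 - 2 * (∑ b, (N1 b * Yx1 b + y1 b * d1x b))
          - 2 * (∑ j, (N2 j * Yx2 j + y2 j * d2x j))) - Xa3)
       - 2 * (∑ b, N1 b * (Yx1 b - Xa1 b)) - 2 * (∑ j, N2 j * (Yx2 j - Xa2 j)))
    = -4 * (∑ b, ∑ c, x1 c * y1 b * (dT1 b c - dT1 c b))
      + 4 * (∑ b, ∑ k, (x1 b * y2 k - x2 k * y1 b) * (dX1 b k - dT2 k b))
      - 4 * (∑ j, ∑ k, x2 k * y2 j * (dX2 j k - dX2 k j)) := by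
  have B1 := Bgen y1 d1ax d1x x1 x2 dT1 dX1 hs1x
  have B2 := Bgen y2 d2ax d2x x1 x2 dT2 dX2 hs2x
  have B3 := Bgen x1 d1ay d1y y1 y2 dT1 dX1 hs1y
  have B4 := Bgen x2 d2ay d2y y1 y2 dT2 dX2 hs2y
  have comm_tt : (∑ b, ∑ c, x1 c * y1 b * dT1 c b) = ∑ b, ∑ c, y1 c * x1 b * dT1 b c :=
    swap2 _ _ (fun b c => by ring)
  have comm_m1 : (∑ b : Fin m, ∑ k : Fin n, x1 b * y2 k * dT2 k b)
      = ∑ j : Fin n, ∑ c : Fin m, x1 c * y2 j * dT2 j c :=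
    swap2 _ _ (fun b c => by ring)
  have comm_m2 : (∑ b : Fin m, ∑ k : Fin n, x2 k * y1 b * dT2 k b)
      = ∑ j : Fin n, ∑ c : Fin m, y1 c * x2 j * dT2 j c :=
    swap2 _ _ (fun b c => by ring)
  have comm_xx : (∑ j : Fin n, ∑ k : Fin n, x2 k * y2 j * dX2 k j)
      = ∑ j : Fin n, ∑ k : Fin n, y2 k * x2 j * dX2 j k :=
    swap2 _ _ (fun b c => by ring)
  have e_mx1 : (∑ b : Fin m, ∑ k : Fin n, x1 b * y2 k * dX1 b k)
      = ∑ b : Fin m, ∑ k : Fin n, y2 k * x1 b * dX1 b k :=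
    Finset.sum_congr rfl fun b _ => Finset.sum_congr rfl fun k _ => by ring
  simp only [mul_add, mul_sub, sub_mul, Finset.sum_add_distrib, Finset.sum_sub_distrib]
  rw [comm_tt, comm_m1, comm_m2, comm_xx, e_mx1]
  linear_combination (-2 : ℝ) * B1 - 2 * B2 + 2 * B3 + 2 * B4

end Helpers4
section Helpers5
open scoped BigOperators
variable {m n : ℕ}

lemma fd_PF1' (N : NLC m n) {X : E m n → E m n} {u : E m n}
    (hX : DifferentiableAt ℝ X u)
    (h1 : ∀ a i b, DifferentiableAt ℝ (N.N1 a i b) u)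
    (h2 : ∀ a i j, DifferentiableAt ℝ (N.N2 a i j) u) (b : Fin m) (v : E m n) :
    (fderiv ℝ (N.PF X) u v).1 b = (fderiv ℝ X u v).1 b := by
  rw [← fd_comp1 (diff_PF N hX h1 h2) b v]
  exact fd_comp1 hX b v

lemma fd_PF2' (N : NLC m n) {X : E m n → E m n} {u : E m n}
    (hX : DifferentiableAt ℝ X u)
    (h1 : ∀ a i b, DifferentiableAt ℝ (N.N1 a i b) u)
    (h2 : ∀ a i j, DifferentiableAt ℝ (N.N2 a i j) u) (j : Fin n) (v : E m n) :
    (fderiv ℝ (N.PF X) u v).2.1 j = (fderiv ℝ X u v).2.1 j := by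
  rw [← fd_comp2 (diff_PF N hX h1 h2) j v]
  exact fd_comp2 hX j v

lemma fd_PF3' (N : NLC m n) {X : E m n → E m n} {u : E m n}
    (hX : DifferentiableAt ℝ X u)
    (h1 : ∀ a i b, DifferentiableAt ℝ (N.N1 a i b) u)
    (h2 : ∀ a i j, DifferentiableAt ℝ (N.N2 a i j) u)
    (a : Fin m) (i : Fin n) (v : E m n) :
    (fderiv ℝ (N.PF X) u v).2.2 a i
      = -((fderiv ℝ X u v).2.2 a i)
        - 2 * (∑ b, (N.N1 a i b u * (fderiv ℝ X u v).1 b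
            + (X u).1 b * fderiv ℝ (N.N1 a i b) u v))
        - 2 * (∑ j, (N.N2 a i j u * (fderiv ℝ X u v).2.1 j
            + (X u).2.1 j * fderiv ℝ (N.N2 a i j) u v)) := by
  rw [← fd_comp3 (diff_PF N hX h1 h2) a i v, fd_PF3 N hX h1 h2 a i v]
  simp only [fd_comp1 hX, fd_comp2 hX, fd_comp3 hX]

lemma nij_master (N : NLC m n) {X Y : E m n → E m n} {u : E m n}
    (hX : DifferentiableAt ℝ X u) (hY : DifferentiableAt ℝ Y u)
    (h1 : ∀ a i b, DifferentiableAt ℝ (N.N1 a i b) u)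
    (h2 : ∀ a i j, DifferentiableAt ℝ (N.N2 a i j) u) :
    Nij N X Y u = (0, 0, fun a i =>
      -4 * (∑ b, ∑ c, (X u).1 c * (Y u).1 b * N.R1 a i b c u)
      + 4 * (∑ b, ∑ k, ((X u).1 b * (Y u).2.1 k - (X u).2.1 k * (Y u).1 b) * N.Rmix a i b k u)
      - 4 * (∑ j, ∑ k, (X u).2.1 k * (Y u).2.1 j * N.R2 a i j k u)) := by
  have e0 : Nij N X Y u = lie X Y u + lie (N.PF X) (N.PF Y) u
      - N.apP u (lie (N.PF X) Y u) - N.apP u (lie X (N.PF Y) u) := by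
    show N.apP u (N.apP u (lie X Y u)) + lie (N.PF X) (N.PF Y) u
      - N.apP u (lie (N.PF X) Y u) - N.apP u (lie X (N.PF Y) u) = _
    rw [apP_apP]
  rw [e0]
  refine Prod.ext ?_ (Prod.ext ?_ ?_)
  · funext b
    simp only [lie, NLC.apP, Prod.fst_add, Prod.fst_sub, Pi.add_apply, Pi.sub_apply,
      Prod.snd_sub, fd_PF1' N hX h1 h2, fd_PF1' N hY h1 h2, Prod.fst_zero, Pi.zero_apply]
    ring
  · funext j
    simp only [lie, NLC.apP, Prod.fst_add, Prod.fst_sub, Prod.snd_add, Prod.snd_sub,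
      Pi.add_apply, Pi.sub_apply, fd_PF2' N hX h1 h2, fd_PF2' N hY h1 h2,
      Prod.snd_zero, Prod.fst_zero, Pi.zero_apply]
    ring
  · funext a i
    simp only [lie, NLC.apP, Prod.fst_add, Prod.fst_sub, Prod.snd_add, Prod.snd_sub,
      Pi.add_apply, Pi.sub_apply, fd_PF1' N hX h1 h2, fd_PF1' N hY h1 h2,
      fd_PF2' N hX h1 h2, fd_PF2' N hY h1 h2, fd_PF3' N hX h1 h2, fd_PF3' N hY h1 h2,
      Prod.snd_zero, Pi.zero_apply, NLC.R1, NLC.Rmix, NLC.R2, NLC.delT, NLC.delX]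
    have SM := scalar_master
      (fun b => N.N1 a i b u) ((X u).1) ((Y u).1)
      (fun b => (fderiv ℝ Y u (X u)).1 b) (fun b => (fderiv ℝ Y u (N.PF X u)).1 b)
      (fun b => (fderiv ℝ X u (Y u)).1 b) (fun b => (fderiv ℝ X u (N.PF Y u)).1 b)
      (fun b => fderiv ℝ (N.N1 a i b) u (X u)) (fun b => fderiv ℝ (N.N1 a i b) u (N.PF X u))
      (fun b => fderiv ℝ (N.N1 a i b) u (Y u)) (fun b => fderiv ℝ (N.N1 a i b) u (N.PF Y u))
      (fun j => N.N2 a i j u) ((X u).2.1) ((Y u).2.1)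
      (fun j => (fderiv ℝ Y u (X u)).2.1 j) (fun j => (fderiv ℝ Y u (N.PF X u)).2.1 j)
      (fun j => (fderiv ℝ X u (Y u)).2.1 j) (fun j => (fderiv ℝ X u (N.PF Y u)).2.1 j)
      (fun j => fderiv ℝ (N.N2 a i j) u (X u)) (fun j => fderiv ℝ (N.N2 a i j) u (N.PF X u))
      (fun j => fderiv ℝ (N.N2 a i j) u (Y u)) (fun j => fderiv ℝ (N.N2 a i j) u (N.PF Y u))
      ((fderiv ℝ Y u (X u)).2.2 a i) ((fderiv ℝ X u (Y u)).2.2 a i)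
      ((fderiv ℝ Y u (N.PF X u)).2.2 a i) ((fderiv ℝ X u (N.PF Y u)).2.2 a i)
      (fun b c => fderiv ℝ (N.N1 a i b) u (N.dT c u))
      (fun b k => fderiv ℝ (N.N1 a i b) u (N.dX k u))
      (fun j c => fderiv ℝ (N.N2 a i j) u (N.dT c u))
      (fun j k => fderiv ℝ (N.N2 a i j) u (N.dX k u))
      (fun b => fd_split N (N.N1 a i b) u (X u))
      (fun b => fd_split N (N.N1 a i b) u (Y u))
      (fun j => fd_split N (N.N2 a i j) u (X u))
      (fun j => fd_split N (N.N2 a i j) u (Y u))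
    beta_reduce at SM
    linear_combination SM

end Helpers5
section Helpers6
open scoped BigOperators
variable {m n : ℕ}

lemma dT_smooth (N : NLC m n) {O : Set (E m n)} (hN : N.SmoothOn O) (c : Fin m) :
    ContDiffOn ℝ (⊤ : ℕ∞) (N.dT c) O := by
  refine ContDiffOn.prodMk contDiffOn_const (ContDiffOn.prodMk contDiffOn_const ?_)
  exact contDiffOn_pi.mpr fun a => contDiffOn_pi.mpr fun i => (hN.1 a i c).neg

lemma dX_smooth (N : NLC m n) {O : Set (E m n)} (hN : N.SmoothOn O) (k : Fin n) :
    ContDiffOn ℝ (⊤ : ℕ∞) (N.dX k) O := by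
  refine ContDiffOn.prodMk contDiffOn_const (ContDiffOn.prodMk contDiffOn_const ?_)
  exact contDiffOn_pi.mpr fun a => contDiffOn_pi.mpr fun i => (hN.2 a i k).neg

end Helpers6

section Statements

open scoped BigOperators

theorem stmt8 (m n : ℕ) (U : Set (Fin m → ℝ)) (V : Set (Fin n → ℝ))
    (hU : IsOpen U) (hV : IsOpen V) (N : NLC m n) (hN : N.SmoothOn (modelSet U V)) :
    (∀ X Y : E m n → E m n,
        ContDiffOn ℝ (⊤ : ℕ∞) X (modelSet U V) → ContDiffOn ℝ (⊤ : ℕ∞) Y (modelSet U V) →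
        ∀ u ∈ modelSet U V, Nij N X Y u = 0)
    ↔ (∀ u ∈ modelSet U V,
        (∀ (a : Fin m) (i : Fin n) (b c : Fin m), N.R1 a i b c u = 0)
        ∧ (∀ (a : Fin m) (i : Fin n) (b : Fin m) (k : Fin n), N.Rmix a i b k u = 0)
        ∧ (∀ (a : Fin m) (i j k : Fin n), N.R2 a i j k u = 0)) := by
  have hO : IsOpen (modelSet U V) := hU.prod (hV.prod isOpen_univ)
  have hdiff : ∀ u ∈ modelSet U V, ∀ Z : E m n → E m n,
      ContDiffOn ℝ (⊤ : ℕ∞) Z (modelSet U V) → DifferentiableAt ℝ Z u := fun u hu Z hZ =>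
    (hZ.contDiffAt (hO.mem_nhds hu)).differentiableAt (by simp)
  have hd1 : ∀ u ∈ modelSet U V, ∀ a i b, DifferentiableAt ℝ (N.N1 a i b) u :=
    fun u hu a i b => ((hN.1 a i b).contDiffAt (hO.mem_nhds hu)).differentiableAt (by simp)
  have hd2 : ∀ u ∈ modelSet U V, ∀ a i j, DifferentiableAt ℝ (N.N2 a i j) u :=
    fun u hu a i j => ((hN.2 a i j).contDiffAt (hO.mem_nhds hu)).differentiableAt (by simp)
  constructor
  · intro h u hu
    refine ⟨?_, ?_, ?_⟩
    · intro a i b c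
      have h0 := h (N.dT c) (N.dT b) (dT_smooth N hN c) (dT_smooth N hN b) u hu
      rw [nij_master N (hdiff u hu _ (dT_smooth N hN c)) (hdiff u hu _ (dT_smooth N hN b))
        (hd1 u hu) (hd2 u hu)] at h0
      have h3 := congrFun (congrFun (congrArg (fun z : E m n => z.2.2) h0) a) i
      simp [NLC.dT, NLC.dX, Pi.single_apply, Finset.sum_ite_eq, Finset.sum_ite_eq',
        ite_self, mul_ite, ite_mul] at h3
      linarith [h3]
    · intro a i b k
      have h0 := h (N.dT b) (N.dX k) (dT_smooth N hN b) (dX_smooth N hN k) u hu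
      rw [nij_master N (hdiff u hu _ (dT_smooth N hN b)) (hdiff u hu _ (dX_smooth N hN k))
        (hd1 u hu) (hd2 u hu)] at h0
      have h3 := congrFun (congrFun (congrArg (fun z : E m n => z.2.2) h0) a) i
      simp [NLC.dT, NLC.dX, Pi.single_apply, Finset.sum_ite_eq, Finset.sum_ite_eq',
        ite_self, mul_ite, ite_mul] at h3
      linarith [h3]
    · intro a i j k
      have h0 := h (N.dX k) (N.dX j) (dX_smooth N hN k) (dX_smooth N hN j) u hu
      rw [nij_master N (hdiff u hu _ (dX_smooth N hN k)) (hdiff u hu _ (dX_smooth N hN j))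
        (hd1 u hu) (hd2 u hu)] at h0
      have h3 := congrFun (congrFun (congrArg (fun z : E m n => z.2.2) h0) a) i
      simp [NLC.dT, NLC.dX, Pi.single_apply, Finset.sum_ite_eq, Finset.sum_ite_eq',
        ite_self, mul_ite, ite_mul] at h3
      linarith [h3]
  · intro h X Y hXc hYc u hu
    rw [nij_master N (hdiff u hu X hXc) (hdiff u hu Y hYc) (hd1 u hu) (hd2 u hu)]
    obtain ⟨hR1, hRm, hR2⟩ := h u hu
    have : ∀ a i, (-4 * (∑ b, ∑ c, (X u).1 c * (Y u).1 b * N.R1 a i b c u)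
        + 4 * (∑ b, ∑ k, ((X u).1 b * (Y u).2.1 k - (X u).2.1 k * (Y u).1 b) * N.Rmix a i b k u)
        - 4 * (∑ j, ∑ k, (X u).2.1 k * (Y u).2.1 j * N.R2 a i j k u)) = 0 := by
      intro a i
      simp [hR1 a i, hRm a i, hR2 a i]
    refine Prod.ext rfl (Prod.ext rfl ?_)
    funext a i
    exact this a i

end Statements
end

section
/- Let φ : U → Ũ and ψ : V → Ṽ determine a jet coordinate change Φ, and let χ^a_{bc} : U → ℝ, χ̃^a_{bc} : Ũ → ℝ satisfy the linear-connection law χ̃^d_{ef}(φ(t)) (∂t̃^e/∂t^b)(∂t̃^f/∂t^c) = χ^a_{bc}(t) ∂t̃^d/∂t^a − ∂²t̃^d/∂t^b∂t^c, and Γ^i_{jk} : V → ℝ, Γ̃^i_{jk} : Ṽ → ℝ the analogous law with respect to ψ. Define the Berwald data on U × V × P: N1^{(a)}_{(i)b} = χ^a_{cb} p_i^c, N2^{(b)}_{(j)k} = −Γ^i_{jk} p_i^b, A^a_{bc} = χ^a_{bc}, H^i_{jk} = Γ^i_{jk}, A^{(a)(j)}_{(i)(b)c} = −δ^j_i χ^a_{bc},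 H^{(a)(j)}_{(i)(b)k} = δ^a_b Γ^j_{ik}, with the remaining five coefficient families zero; and the tilde data analogously on Ũ × Ṽ × P. Then: (i) N^B = (N1, N2) and Ñ^B are related by the nonlinear connection transformation rule (7) under Φ; and (ii) the coefficients obey the N-linear connection transformation rules, in particular A^{(a)(j)}_{(i)(b)c}(u) = Ã^{(d)(l)}_{(k)(f)g}(Φ(u)) · (∂t^a/∂t̃^d)(∂x̃^k/∂x^i)(∂x^j/∂x̃^l)(∂t̃^f/∂t^b)(∂t̃^g/∂t^c) − δ^j_i (∂t^a/∂t̃^d)(∂²t̃^d/∂t^b∂t^c) and H^{(a)(j)}_{(i)(b)k}(u) = H̃^{(f)(l)}_{(r)(g)s}(Φ(u)) · (∂t^a/∂t̃^f)(∂x̃^r/∂x^i)(∂x^j/∂x̃^l)(∂t̃^g/∂t^b)(∂x̃^s/∂x^k) − δ^a_b (∂x̃^r/∂x^i)(∂x̃^s/∂x^k)(∂²x^j/∂x̃^r∂x̃^s). -/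
section Statements

open scoped BigOperators

theorem clm_sum {N : ℕ} (L : (Fin N → ℝ) →L[ℝ] ℝ) (v : Fin N → ℝ) :
    L v = ∑ k, v k * L (Pi.single k 1) := by
  have hv : v = ∑ k, v k • (Pi.single k 1 : Fin N → ℝ) := by
    funext x; simp [Pi.single_apply, Finset.sum_apply]
  conv_lhs => rw [hv]
  rw [map_sum]; simp [smul_eq_mul]

theorem clm_sum' {N M : ℕ} (L : (Fin N → ℝ) →L[ℝ] (Fin M → ℝ)) (v : Fin N → ℝ) (j : Fin M) :
    L v j = ∑ k, v k * L (Pi.single k 1) j := by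
  simpa using clm_sum ((ContinuousLinearMap.proj j).comp L) v

theorem diffeo_diffAt {N : ℕ} {f : (Fin N → ℝ) → (Fin N → ℝ)} {O : Set (Fin N → ℝ)}
    (hO : IsOpen O) (hf : ContDiffOn ℝ (⊤ : ℕ∞) f O) {t : Fin N → ℝ} (ht : t ∈ O) :
    DifferentiableAt ℝ f t :=
  (hf.contDiffAt (hO.mem_nhds ht)).differentiableAt (by simp)

theorem jac_contDiffOn {N : ℕ} {f : (Fin N → ℝ) → (Fin N → ℝ)} {O : Set (Fin N → ℝ)}
    (hO : IsOpen O) (hf : ContDiffOn ℝ (⊤ : ℕ∞) f O) (b a : Fin N) :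
    ContDiffOn ℝ (⊤ : ℕ∞) (fun s => Jac f s b a) O := by
  have h1 : ContDiffOn ℝ (⊤ : ℕ∞) (fderiv ℝ f) O := hf.fderiv_of_isOpen hO (by simp)
  exact (contDiffOn_pi.1 (h1.clm_apply contDiffOn_const)) b

theorem jac_diffAt {N : ℕ} {f : (Fin N → ℝ) → (Fin N → ℝ)} {O : Set (Fin N → ℝ)}
    (hO : IsOpen O) (hf : ContDiffOn ℝ (⊤ : ℕ∞) f O) {t : Fin N → ℝ} (ht : t ∈ O) (b a : Fin N) :
    DifferentiableAt ℝ (fun s => Jac f s b a) t :=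
  ((jac_contDiffOn hO hf b a).contDiffAt (hO.mem_nhds ht)).differentiableAt (by simp)

theorem diffeo_chain {N : ℕ} {f g : (Fin N → ℝ) → (Fin N → ℝ)} {O O' : Set (Fin N → ℝ)}
    (hO : IsOpen O) (hO' : IsOpen O')
    (hf : ContDiffOn ℝ (⊤ : ℕ∞) f O) (hg : ContDiffOn ℝ (⊤ : ℕ∞) g O')
    (hmaps : Set.MapsTo f O O') (hleft : ∀ t ∈ O, g (f t) = t)
    {t : Fin N → ℝ} (ht : t ∈ O) :
    (fderiv ℝ g (f t)).comp (fderiv ℝ f t) = ContinuousLinearMap.id ℝ (Fin N → ℝ) := by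
  have hdf : HasFDerivAt f (fderiv ℝ f t) t := (diffeo_diffAt hO hf ht).hasFDerivAt
  have hdg : HasFDerivAt g (fderiv ℝ g (f t)) (f t) :=
    (diffeo_diffAt hO' hg (hmaps ht)).hasFDerivAt
  have hcomp : HasFDerivAt (g ∘ f) ((fderiv ℝ g (f t)).comp (fderiv ℝ f t)) t :=
    hdg.comp t hdf
  have heq : (g ∘ f) =ᶠ[nhds t] id := by
    filter_upwards [hO.mem_nhds ht] with s hs using hleft s hs
  have hid : HasFDerivAt id ((fderiv ℝ g (f t)).comp (fderiv ℝ f t)) t :=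
    hcomp.congr_of_eventuallyEq heq.symm
  exact hid.unique (hasFDerivAt_id t)

theorem diffeo_delta {N : ℕ} {f g : (Fin N → ℝ) → (Fin N → ℝ)} {O O' : Set (Fin N → ℝ)}
    (hO : IsOpen O) (hO' : IsOpen O')
    (hf : ContDiffOn ℝ (⊤ : ℕ∞) f O) (hg : ContDiffOn ℝ (⊤ : ℕ∞) g O')
    (hmaps : Set.MapsTo f O O') (hleft : ∀ t ∈ O, g (f t) = t)
    {t : Fin N → ℝ} (ht : t ∈ O) (j i : Fin N) :
    ∑ k, Jac g (f t) j k * Jac f t k i = if j = i then 1 else 0 := by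
  have h := diffeo_chain hO hO' hf hg hmaps hleft ht
  have h2 : fderiv ℝ g (f t) (fderiv ℝ f t (Pi.single i 1)) = Pi.single i 1 := by
    have := congrArg (fun L => L (Pi.single i (1:ℝ))) h
    simpa using this
  have h3 := clm_sum' (fderiv ℝ g (f t)) (fderiv ℝ f t (Pi.single i 1)) j
  rw [h2] at h3
  have h4 : (Pi.single i 1 : Fin N → ℝ) j = if j = i then 1 else 0 := by
    simp [Pi.single_apply]
  rw [h4] at h3
  rw [h3]
  exact Finset.sum_congr rfl fun k _ => by simp only [Jac]; ring

theorem jac_schwarz {N : ℕ} {f : (Fin N → ℝ) → (Fin N → ℝ)} {O : Set (Fin N → ℝ)}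
    (hO : IsOpen O) (hf : ContDiffOn ℝ (⊤ : ℕ∞) f O) {t : Fin N → ℝ} (ht : t ∈ O) (d c b : Fin N) :
    fderiv ℝ (fun s => Jac f s d c) t (Pi.single b 1)
      = fderiv ℝ (fun s => Jac f s d b) t (Pi.single c 1) := by
  have hct : ContDiffAt ℝ (⊤ : ℕ∞) f t := hf.contDiffAt (hO.mem_nhds ht)
  have hsymm : IsSymmSndFDerivAt ℝ f t := hct.isSymmSndFDerivAt (by rw [minSmoothness_of_isRCLikeNormedField]; exact WithTop.coe_le_coe.2 (le_top : (2:ℕ∞) ≤ ⊤))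
  have hF : ContDiffOn ℝ (⊤ : ℕ∞) (fderiv ℝ f) O := hf.fderiv_of_isOpen hO (by simp)
  have hFd : DifferentiableAt ℝ (fderiv ℝ f) t :=
    (hF.contDiffAt (hO.mem_nhds ht)).differentiableAt (by simp)
  have key : ∀ v w : Fin N → ℝ,
      fderiv ℝ (fun s => fderiv ℝ f s v d) t w = fderiv ℝ (fderiv ℝ f) t w v d := by
    intro v w
    have hL : HasFDerivAt (fun s => fderiv ℝ f s v d)
        (((ContinuousLinearMap.proj d).comp
          (ContinuousLinearMap.apply ℝ (Fin N → ℝ) v)).comp (fderiv ℝ (fderiv ℝ f) t)) t := by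
      exact (((ContinuousLinearMap.proj d).comp
        (ContinuousLinearMap.apply ℝ (Fin N → ℝ) v)).hasFDerivAt).comp t hFd.hasFDerivAt
    rw [hL.fderiv]
    rfl
  show fderiv ℝ (fun s => fderiv ℝ f s (Pi.single c 1) d) t (Pi.single b 1)
      = fderiv ℝ (fun s => fderiv ℝ f s (Pi.single b 1) d) t (Pi.single c 1)
  rw [key, key, hsymm (Pi.single b 1) (Pi.single c 1)]

theorem jacg_comp_diffAt {N : ℕ} {f g : (Fin N → ℝ) → (Fin N → ℝ)} {O O' : Set (Fin N → ℝ)}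
    (hO : IsOpen O) (hO' : IsOpen O')
    (hf : ContDiffOn ℝ (⊤ : ℕ∞) f O) (hg : ContDiffOn ℝ (⊤ : ℕ∞) g O')
    (hmaps : Set.MapsTo f O O') {x : Fin N → ℝ} (hx : x ∈ O) (q l : Fin N) :
    DifferentiableAt ℝ (fun s => Jac g (f s) q l) x :=
  (jac_diffAt hO' hg (hmaps hx) q l).comp x (diffeo_diffAt hO hf hx)

theorem jacg_comp_fderiv {N : ℕ} {f g : (Fin N → ℝ) → (Fin N → ℝ)} {O O' : Set (Fin N → ℝ)}
    (hO : IsOpen O) (hO' : IsOpen O')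
    (hf : ContDiffOn ℝ (⊤ : ℕ∞) f O) (hg : ContDiffOn ℝ (⊤ : ℕ∞) g O')
    (hmaps : Set.MapsTo f O O') {x : Fin N → ℝ} (hx : x ∈ O) (q l r : Fin N) :
    fderiv ℝ (fun s => Jac g (f s) q l) x (Pi.single r 1)
      = ∑ s, Jac f x s r * fderiv ℝ (fun y => Jac g y q l) (f x) (Pi.single s 1) := by
  have hcomp : fderiv ℝ ((fun y => Jac g y q l) ∘ f) x
      = (fderiv ℝ (fun y => Jac g y q l) (f x)).comp (fderiv ℝ f x) :=
    fderiv_comp x (jac_diffAt hO' hg (hmaps hx) q l) (diffeo_diffAt hO hf hx)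
  have : fderiv ℝ (fun s => Jac g (f s) q l) x (Pi.single r 1)
      = fderiv ℝ (fun y => Jac g y q l) (f x) (fderiv ℝ f x (Pi.single r 1)) := by
    have := congrArg (fun L => L (Pi.single r (1:ℝ))) hcomp
    simpa [Function.comp_def] using this
  rw [this, clm_sum]
  rfl

theorem jac_prod_identity {N : ℕ} {f g : (Fin N → ℝ) → (Fin N → ℝ)} {O O' : Set (Fin N → ℝ)}
    (hO : IsOpen O) (hO' : IsOpen O')
    (hf : ContDiffOn ℝ (⊤ : ℕ∞) f O) (hg : ContDiffOn ℝ (⊤ : ℕ∞) g O')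
    (hmaps : Set.MapsTo f O O') (hleft : ∀ t ∈ O, g (f t) = t)
    {x : Fin N → ℝ} (hx : x ∈ O) (q e r : Fin N) :
    (∑ l, fderiv ℝ (fun s => Jac g (f s) q l) x (Pi.single r 1) * Jac f x l e)
      + ∑ l, Jac g (f x) q l * fderiv ℝ (fun s => Jac f s l e) x (Pi.single r 1) = 0 := by
  set h : (Fin N → ℝ) → ℝ := fun x' => ∑ l, Jac g (f x') q l * Jac f x' l e with hh
  have hconst : h =ᶠ[nhds x] (fun _ => if q = e then 1 else 0) := by
    filter_upwards [hO.mem_nhds hx] with s hs using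
      diffeo_delta hO hO' hf hg hmaps hleft hs q e
  have h0 : fderiv ℝ h x = 0 := by
    rw [hconst.fderiv_eq]; exact fderiv_const_apply _
  have hsum : HasFDerivAt h
      (∑ l, ((Jac g (f x) q l) • fderiv ℝ (fun s => Jac f s l e) x
        + (Jac f x l e) • fderiv ℝ (fun s => Jac g (f s) q l) x)) x := by
    apply HasFDerivAt.fun_sum
    intro l _
    exact ((jacg_comp_diffAt hO hO' hf hg hmaps hx q l).hasFDerivAt).mul
      ((jac_diffAt hO hf hx l e).hasFDerivAt)
  have := congrArg (fun L : (Fin N → ℝ) →L[ℝ] ℝ => L (Pi.single r 1)) (hsum.fderiv.symm.trans h0)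
  simp only [ContinuousLinearMap.coe_sum', Finset.sum_apply, ContinuousLinearMap.add_apply,
    ContinuousLinearMap.coe_smul', Pi.smul_apply, smul_eq_mul, ContinuousLinearMap.zero_apply]
    at this
  rw [Finset.sum_add_distrib] at this
  calc (∑ l, fderiv ℝ (fun s => Jac g (f s) q l) x (Pi.single r 1) * Jac f x l e)
      + ∑ l, Jac g (f x) q l * fderiv ℝ (fun s => Jac f s l e) x (Pi.single r 1)
      = (∑ l, Jac g (f x) q l * fderiv ℝ (fun s => Jac f s l e) x (Pi.single r 1))
      + ∑ l, Jac f x l e * fderiv ℝ (fun s => Jac g (f s) q l) x (Pi.single r 1) := by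
        rw [add_comm]
        congr 1
        exact Finset.sum_congr rfl fun l _ => mul_comm _ _
    _ = 0 := this

theorem Phi_p_fderiv {m n : ℕ} (C : JetChange m n) {u : E m n}
    (hu1 : u.1 ∈ C.U) (hu2 : u.2.1 ∈ C.V) (b : Fin m) (j : Fin n) (ξ : E m n) :
    fderiv ℝ (fun v => (C.Φ v).2.2 b j) u ξ = ∑ c, ∑ k,
      (fderiv ℝ (fun s => Jac C.φ s b c) u.1 ξ.1 * Jac C.ψi (C.ψ u.2.1) k j * u.2.2 c k
       + Jac C.φ u.1 b c * fderiv ℝ (fun x => Jac C.ψi (C.ψ x) k j) u.2.1 ξ.2.1 * u.2.2 c k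
       + Jac C.φ u.1 b c * Jac C.ψi (C.ψ u.2.1) k j * ξ.2.2 c k) := by
  have hA : ∀ c, HasFDerivAt (fun v : E m n => Jac C.φ v.1 b c)
      ((fderiv ℝ (fun s => Jac C.φ s b c) u.1).comp
        (ContinuousLinearMap.fst ℝ (Fin m → ℝ) ((Fin n → ℝ) × (Fin m → Fin n → ℝ)))) u :=
    fun c => ((jac_diffAt C.hUopen C.hφ hu1 b c).hasFDerivAt).comp u hasFDerivAt_fst
  have hB : ∀ k, HasFDerivAt (fun v : E m n => Jac C.ψi (C.ψ v.2.1) k j)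
      ((fderiv ℝ (fun x => Jac C.ψi (C.ψ x) k j) u.2.1).comp
        ((ContinuousLinearMap.fst ℝ (Fin n → ℝ) (Fin m → Fin n → ℝ)).comp
          (ContinuousLinearMap.snd ℝ (Fin m → ℝ) ((Fin n → ℝ) × (Fin m → Fin n → ℝ))))) u :=
    fun k => by
      have h1 := (jacg_comp_diffAt C.hVopen C.hV'open C.hψ C.hψi C.hψmaps hu2 k j).hasFDerivAt
      have h2 : HasFDerivAt (fun v : E m n => v.2.1)
          ((ContinuousLinearMap.fst ℝ (Fin n → ℝ) (Fin m → Fin n → ℝ)).comp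
            (ContinuousLinearMap.snd ℝ (Fin m → ℝ) ((Fin n → ℝ) × (Fin m → Fin n → ℝ)))) u :=
        hasFDerivAt_snd.fst
      exact h1.comp u h2
  have hP : ∀ (c : Fin m) (k : Fin n), HasFDerivAt (fun v : E m n => v.2.2 c k)
      (((ContinuousLinearMap.proj k).comp (ContinuousLinearMap.proj c)).comp
        ((ContinuousLinearMap.snd ℝ (Fin n → ℝ) (Fin m → Fin n → ℝ)).comp
          (ContinuousLinearMap.snd ℝ (Fin m → ℝ) ((Fin n → ℝ) × (Fin m → Fin n → ℝ))))) u :=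
    fun c k => (((ContinuousLinearMap.proj k).comp (ContinuousLinearMap.proj c)).comp
        ((ContinuousLinearMap.snd ℝ (Fin n → ℝ) (Fin m → Fin n → ℝ)).comp
          (ContinuousLinearMap.snd ℝ (Fin m → ℝ)
            ((Fin n → ℝ) × (Fin m → Fin n → ℝ))))).hasFDerivAt
  have htot : HasFDerivAt (fun v => (C.Φ v).2.2 b j)
      (∑ c, ∑ k,
        ((Jac C.φ u.1 b c * Jac C.ψi (C.ψ u.2.1) k j) •
            (((ContinuousLinearMap.proj k).comp (ContinuousLinearMap.proj c)).comp
              ((ContinuousLinearMap.snd ℝ (Fin n → ℝ) (Fin m → Fin n → ℝ)).comp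
                (ContinuousLinearMap.snd ℝ (Fin m → ℝ) ((Fin n → ℝ) × (Fin m → Fin n → ℝ)))))
          + u.2.2 c k •
            (Jac C.φ u.1 b c •
              ((fderiv ℝ (fun x => Jac C.ψi (C.ψ x) k j) u.2.1).comp
                ((ContinuousLinearMap.fst ℝ (Fin n → ℝ) (Fin m → Fin n → ℝ)).comp
                  (ContinuousLinearMap.snd ℝ (Fin m → ℝ) ((Fin n → ℝ) × (Fin m → Fin n → ℝ)))))
            + Jac C.ψi (C.ψ u.2.1) k j •
              ((fderiv ℝ (fun s => Jac C.φ s b c) u.1).comp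
                (ContinuousLinearMap.fst ℝ (Fin m → ℝ)
                  ((Fin n → ℝ) × (Fin m → Fin n → ℝ))))))) u := by
    show HasFDerivAt (fun v : E m n =>
      ∑ c, ∑ k, Jac C.φ v.1 b c * Jac C.ψi (C.ψ v.2.1) k j * v.2.2 c k) _ u
    apply HasFDerivAt.fun_sum
    intro c _
    apply HasFDerivAt.fun_sum
    intro k _
    exact ((hA c).mul (hB k)).mul (hP c k)
  rw [htot.fderiv]
  simp only [ContinuousLinearMap.coe_sum', Finset.sum_apply, ContinuousLinearMap.add_apply,
    ContinuousLinearMap.coe_smul', Pi.smul_apply, ContinuousLinearMap.coe_comp',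
    Function.comp_apply, ContinuousLinearMap.coe_fst', ContinuousLinearMap.coe_snd',
    ContinuousLinearMap.proj_apply, smul_eq_mul]
  refine Finset.sum_congr rfl fun c _ => Finset.sum_congr rfl fun k _ => by ring
theorem Phi_p_fderivT {m n : ℕ} (C : JetChange m n) {u : E m n}
    (hu1 : u.1 ∈ C.U) (hu2 : u.2.1 ∈ C.V) (b : Fin m) (j : Fin n) (a : Fin m) :
    fderiv ℝ (fun v => (C.Φ v).2.2 b j) u (dTnat m n a) = ∑ c, ∑ k,
      fderiv ℝ (fun s => Jac C.φ s b c) u.1 (Pi.single a 1)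
        * Jac C.ψi (C.ψ u.2.1) k j * u.2.2 c k := by
  rw [Phi_p_fderiv C hu1 hu2 b j]
  refine Finset.sum_congr rfl fun c _ => Finset.sum_congr rfl fun k _ => ?_
  simp [dTnat]

theorem Phi_p_fderivX {m n : ℕ} (C : JetChange m n) {u : E m n}
    (hu1 : u.1 ∈ C.U) (hu2 : u.2.1 ∈ C.V) (b : Fin m) (j : Fin n) (i : Fin n) :
    fderiv ℝ (fun v => (C.Φ v).2.2 b j) u (dXnat m n i) = ∑ c, ∑ k,
      Jac C.φ u.1 b c
        * fderiv ℝ (fun x => Jac C.ψi (C.ψ x) k j) u.2.1 (Pi.single i 1) * u.2.2 c k := by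
  rw [Phi_p_fderiv C hu1 hu2 b j]
  refine Finset.sum_congr rfl fun c _ => Finset.sum_congr rfl fun k _ => ?_
  simp [dXnat]

theorem sum_comm3 {A B C : Type*} [Fintype A] [Fintype B] [Fintype C] (F : A → B → C → ℝ) :
    ∑ a, ∑ b, ∑ c, F a b c = ∑ c, ∑ a, ∑ b, F a b c := by
  calc ∑ a, ∑ b, ∑ c, F a b c = ∑ a, ∑ c, ∑ b, F a b c :=
        Finset.sum_congr rfl fun a _ => Finset.sum_comm
    _ = ∑ c, ∑ a, ∑ b, F a b c := Finset.sum_comm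

theorem stmt9 (m n : ℕ) (C : JetChange m n)
    (χ χ' : Fin m → Fin m → Fin m → (Fin m → ℝ) → ℝ)
    (Γ Γ' : Fin n → Fin n → Fin n → (Fin n → ℝ) → ℝ)
    (hχ : ∀ a b c, ContDiffOn ℝ (⊤ : ℕ∞) (χ a b c) C.U)
    (hχ' : ∀ a b c, ContDiffOn ℝ (⊤ : ℕ∞) (χ' a b c) C.U')
    (hΓ : ∀ i j k, ContDiffOn ℝ (⊤ : ℕ∞) (Γ i j k) C.V)
    (hΓ' : ∀ i j k, ContDiffOn ℝ (⊤ : ℕ∞) (Γ' i j k) C.V')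
    (hχlaw : ∀ t ∈ C.U, ∀ d b c : Fin m,
      ∑ e, ∑ f, χ' d e f (C.φ t) * Jac C.φ t e b * Jac C.φ t f c
        = (∑ a, χ a b c t * Jac C.φ t d a)
          - fderiv ℝ (fun s => Jac C.φ s d c) t (Pi.single b 1))
    (hΓlaw : ∀ x ∈ C.V, ∀ l j k : Fin n,
      ∑ r, ∑ s, Γ' l r s (C.ψ x) * Jac C.ψ x r j * Jac C.ψ x s k
        = (∑ i, Γ i j k x * Jac C.ψ x l i)
          - fderiv ℝ (fun y => Jac C.ψ y l k) x (Pi.single j 1)) :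
    C.Rule7 (berN χ Γ) (berN χ' Γ')
    ∧ (∀ u ∈ C.src, ∀ (a : Fin m) (i : Fin n) (b : Fin m) (j : Fin n) (c : Fin m),
        (berD χ Γ : NLinConn m n).A3 a i b j c u
          = (∑ d, ∑ k, ∑ l, ∑ f, ∑ g,
              (berD χ' Γ' : NLinConn m n).A3 d k f l g (C.Φ u)
                * Jac C.φi (C.φ u.1) a d * Jac C.ψ u.2.1 k i
                * Jac C.ψi (C.ψ u.2.1) j l * Jac C.φ u.1 f b * Jac C.φ u.1 g c)
            - (if j = i then (1 : ℝ) else 0)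
              * ∑ d, Jac C.φi (C.φ u.1) a d
                  * fderiv ℝ (fun s => Jac C.φ s d c) u.1 (Pi.single b 1))
    ∧ (∀ u ∈ C.src, ∀ (a : Fin m) (i : Fin n) (b : Fin m) (j k : Fin n),
        (berD χ Γ : NLinConn m n).H3 a i b j k u
          = (∑ f, ∑ r, ∑ g, ∑ l, ∑ s,
              (berD χ' Γ' : NLinConn m n).H3 f r g l s (C.Φ u)
                * Jac C.φi (C.φ u.1) a f * Jac C.ψ u.2.1 r i
                * Jac C.ψi (C.ψ u.2.1) j l * Jac C.φ u.1 g b * Jac C.ψ u.2.1 s k)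
            - (if a = b then (1 : ℝ) else 0)
              * ∑ r, ∑ s, Jac C.ψ u.2.1 r i * Jac C.ψ u.2.1 s k
                  * fderiv ℝ (fun y => Jac C.ψi y j s) (C.ψ u.2.1) (Pi.single r 1)) := by
  refine ⟨?_, ?_, ?_⟩
  · -- transformation rule (7)
    intro u hu
    have hu1 : u.1 ∈ C.U := hu.1
    have hu2 : u.2.1 ∈ C.V := hu.2.1
    have dKψ : ∀ j' i', (∑ l, Jac C.ψi (C.ψ u.2.1) j' l * Jac C.ψ u.2.1 l i')
        = if j' = i' then (1:ℝ) else 0 :=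
      diffeo_delta C.hVopen C.hV'open C.hψ C.hψi C.hψmaps C.hψleft hu2
    have dKψ2 : ∀ r' j', (∑ r, Jac C.ψ u.2.1 r' r * Jac C.ψi (C.ψ u.2.1) r j')
        = if r' = j' then (1:ℝ) else 0 := by
      intro r' j'
      have := diffeo_delta C.hV'open C.hVopen C.hψi C.hψ C.hψimaps C.hψright
        (C.hψmaps hu2) r' j'
      rwa [C.hψleft u.2.1 hu2] at this
    refine ⟨fun b j a => ?_, fun b j i => ?_⟩
    · -- N1 law
      rw [Phi_p_fderivT C hu1 hu2 b j a]
      simp only [berN, JetChange.Φ]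
      calc (∑ c, (∑ e, χ' b e c (C.φ u.1)
              * ∑ d, ∑ k, Jac C.φ u.1 e d * Jac C.ψi (C.ψ u.2.1) k j * u.2.2 d k)
            * Jac C.φ u.1 c a)
          = ∑ c, ∑ e, ∑ d, ∑ k, χ' b e c (C.φ u.1) * Jac C.φ u.1 e d
              * Jac C.ψi (C.ψ u.2.1) k j * u.2.2 d k * Jac C.φ u.1 c a := by
            refine Finset.sum_congr rfl fun c _ => ?_
            rw [Finset.sum_mul]
            refine Finset.sum_congr rfl fun e _ => ?_
            rw [Finset.mul_sum, Finset.sum_mul]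
            refine Finset.sum_congr rfl fun d _ => ?_
            rw [Finset.mul_sum, Finset.sum_mul]
            exact Finset.sum_congr rfl fun k _ => by ring
        _ = ∑ d, ∑ k, ∑ c, ∑ e, χ' b e c (C.φ u.1) * Jac C.φ u.1 e d
              * Jac C.ψi (C.ψ u.2.1) k j * u.2.2 d k * Jac C.φ u.1 c a := by
            rw [sum_comm3]
            exact Finset.sum_congr rfl fun d _ => sum_comm3 _
        _ = ∑ d, ∑ k, (Jac C.ψi (C.ψ u.2.1) k j * u.2.2 d k)
              * ∑ e, ∑ c, χ' b e c (C.φ u.1) * Jac C.φ u.1 e d * Jac C.φ u.1 c a := by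
            refine Finset.sum_congr rfl fun d _ => Finset.sum_congr rfl fun k _ => ?_
            rw [Finset.sum_comm (f := fun c e => χ' b e c (C.φ u.1) * Jac C.φ u.1 e d
              * Jac C.ψi (C.ψ u.2.1) k j * u.2.2 d k * Jac C.φ u.1 c a)]
            simp only [Finset.mul_sum]
            exact Finset.sum_congr rfl fun e _ => Finset.sum_congr rfl fun c _ => by ring
        _ = ∑ d, ∑ k, (Jac C.ψi (C.ψ u.2.1) k j * u.2.2 d k)
              * ((∑ q, χ q d a u.1 * Jac C.φ u.1 b q)
                 - fderiv ℝ (fun s => Jac C.φ s b a) u.1 (Pi.single d 1)) := by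
            refine Finset.sum_congr rfl fun d _ => Finset.sum_congr rfl fun k _ => ?_
            rw [hχlaw u.1 hu1 b d a]
        _ = (∑ d, ∑ k, (Jac C.ψi (C.ψ u.2.1) k j * u.2.2 d k)
              * ∑ q, χ q d a u.1 * Jac C.φ u.1 b q)
            - ∑ d, ∑ k, (Jac C.ψi (C.ψ u.2.1) k j * u.2.2 d k)
              * fderiv ℝ (fun s => Jac C.φ s b a) u.1 (Pi.single d 1) := by
            rw [← Finset.sum_sub_distrib]
            refine Finset.sum_congr rfl fun d _ => ?_
            rw [← Finset.sum_sub_distrib]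
            exact Finset.sum_congr rfl fun k _ => mul_sub _ _ _
        _ = (∑ c, ∑ k, (∑ e, χ c e a u.1 * u.2.2 e k) * Jac C.φ u.1 b c
              * Jac C.ψi (C.ψ u.2.1) k j)
            - ∑ c, ∑ k, fderiv ℝ (fun s => Jac C.φ s b c) u.1 (Pi.single a 1)
              * Jac C.ψi (C.ψ u.2.1) k j * u.2.2 c k := by
            congr 1
            · calc (∑ d, ∑ k, (Jac C.ψi (C.ψ u.2.1) k j * u.2.2 d k)
                      * ∑ q, χ q d a u.1 * Jac C.φ u.1 b q)
                  = ∑ d, ∑ k, ∑ q, (Jac C.ψi (C.ψ u.2.1) k j * u.2.2 d k)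
                      * (χ q d a u.1 * Jac C.φ u.1 b q) := by
                    refine Finset.sum_congr rfl fun d _ => Finset.sum_congr rfl fun k _ => ?_
                    rw [Finset.mul_sum]
                _ = ∑ q, ∑ d, ∑ k, (Jac C.ψi (C.ψ u.2.1) k j * u.2.2 d k)
                      * (χ q d a u.1 * Jac C.φ u.1 b q) := sum_comm3 _
                _ = ∑ q, ∑ k, ∑ d, (Jac C.ψi (C.ψ u.2.1) k j * u.2.2 d k)
                      * (χ q d a u.1 * Jac C.φ u.1 b q) :=
                    Finset.sum_congr rfl fun q _ => Finset.sum_comm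
                _ = ∑ c, ∑ k, (∑ e, χ c e a u.1 * u.2.2 e k) * Jac C.φ u.1 b c
                      * Jac C.ψi (C.ψ u.2.1) k j := by
                    refine Finset.sum_congr rfl fun c _ => Finset.sum_congr rfl fun k _ => ?_
                    rw [Finset.sum_mul, Finset.sum_mul]
                    exact Finset.sum_congr rfl fun e _ => by ring
            · refine Finset.sum_congr rfl fun c _ => Finset.sum_congr rfl fun k _ => ?_
              rw [jac_schwarz C.hUopen C.hφ hu1 b a c]
              ring
    · -- N2 law
      have GiExp : ∀ q l r, fderiv ℝ (fun s => Jac C.ψi (C.ψ s) q l) u.2.1 (Pi.single r 1)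
          = ∑ s, Jac C.ψ u.2.1 s r
              * fderiv ℝ (fun y => Jac C.ψi y q l) (C.ψ u.2.1) (Pi.single s 1) :=
        fun q l r => jacg_comp_fderiv C.hVopen C.hV'open C.hψ C.hψi C.hψmaps hu2 q l r
      have hKiM : ∀ q : Fin n, (∑ r, Jac C.ψi (C.ψ u.2.1) r j
            * ∑ l, Jac C.ψi (C.ψ u.2.1) q l
                * fderiv ℝ (fun s => Jac C.ψ s l i) u.2.1 (Pi.single r 1))
          = -(fderiv ℝ (fun s => Jac C.ψi (C.ψ s) q j) u.2.1 (Pi.single i 1)) := by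
        intro q
        calc (∑ r, Jac C.ψi (C.ψ u.2.1) r j
              * ∑ l, Jac C.ψi (C.ψ u.2.1) q l
                  * fderiv ℝ (fun s => Jac C.ψ s l i) u.2.1 (Pi.single r 1))
            = ∑ r, Jac C.ψi (C.ψ u.2.1) r j
                * -(∑ l, fderiv ℝ (fun s => Jac C.ψi (C.ψ s) q l) u.2.1 (Pi.single r 1)
                    * Jac C.ψ u.2.1 l i) := by
              refine Finset.sum_congr rfl fun r _ => ?_
              have I1 := jac_prod_identity C.hVopen C.hV'open C.hψ C.hψi C.hψmaps
                C.hψleft hu2 q i r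
              have h2 : (∑ l, Jac C.ψi (C.ψ u.2.1) q l
                  * fderiv ℝ (fun s => Jac C.ψ s l i) u.2.1 (Pi.single r 1))
                = -(∑ l, fderiv ℝ (fun s => Jac C.ψi (C.ψ s) q l) u.2.1 (Pi.single r 1)
                    * Jac C.ψ u.2.1 l i) := by linarith
              rw [h2]
          _ = -∑ r, ∑ l, Jac C.ψi (C.ψ u.2.1) r j
                * (fderiv ℝ (fun s => Jac C.ψi (C.ψ s) q l) u.2.1 (Pi.single r 1)
                    * Jac C.ψ u.2.1 l i) := by
              rw [← Finset.sum_neg_distrib]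
              exact Finset.sum_congr rfl fun r _ => by rw [mul_neg, Finset.mul_sum]
          _ = -∑ r, ∑ l, ∑ s, Jac C.ψi (C.ψ u.2.1) r j
                * (Jac C.ψ u.2.1 s r
                    * fderiv ℝ (fun y => Jac C.ψi y q l) (C.ψ u.2.1) (Pi.single s 1)
                    * Jac C.ψ u.2.1 l i) := by
              congr 1
              refine Finset.sum_congr rfl fun r _ => Finset.sum_congr rfl fun l _ => ?_
              rw [GiExp q l r, Finset.sum_mul, Finset.mul_sum]
          _ = -∑ l, ∑ s, ∑ r, Jac C.ψi (C.ψ u.2.1) r j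
                * (Jac C.ψ u.2.1 s r
                    * fderiv ℝ (fun y => Jac C.ψi y q l) (C.ψ u.2.1) (Pi.single s 1)
                    * Jac C.ψ u.2.1 l i) := by
              congr 1
              exact (sum_comm3 _).symm
          _ = -∑ l, ∑ s, fderiv ℝ (fun y => Jac C.ψi y q l) (C.ψ u.2.1) (Pi.single s 1)
                * Jac C.ψ u.2.1 l i * (if s = j then (1:ℝ) else 0) := by
              congr 1
              refine Finset.sum_congr rfl fun l _ => Finset.sum_congr rfl fun s _ => ?_
              rw [← dKψ2 s j, Finset.mul_sum]
              exact Finset.sum_congr rfl fun r _ => by ring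
          _ = -∑ l, fderiv ℝ (fun y => Jac C.ψi y q l) (C.ψ u.2.1) (Pi.single j 1)
                * Jac C.ψ u.2.1 l i := by
              congr 1
              refine Finset.sum_congr rfl fun l _ => ?_
              simp
          _ = -∑ l, fderiv ℝ (fun y => Jac C.ψi y q j) (C.ψ u.2.1) (Pi.single l 1)
                * Jac C.ψ u.2.1 l i := by
              congr 1
              refine Finset.sum_congr rfl fun l _ => ?_
              rw [jac_schwarz C.hV'open C.hψi (C.hψmaps hu2) q l j]
          _ = -(fderiv ℝ (fun s => Jac C.ψi (C.ψ s) q j) u.2.1 (Pi.single i 1)) := by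
              rw [GiExp q j i]
              congr 1
              exact Finset.sum_congr rfl fun l _ => by ring
      have hstar : ∀ l, (∑ k, Γ' l j k (C.ψ u.2.1) * Jac C.ψ u.2.1 k i)
          = ∑ r, Jac C.ψi (C.ψ u.2.1) r j
              * ((∑ e, Γ e r i u.2.1 * Jac C.ψ u.2.1 l e)
                 - fderiv ℝ (fun y => Jac C.ψ y l i) u.2.1 (Pi.single r 1)) := by
        intro l
        symm
        calc (∑ r, Jac C.ψi (C.ψ u.2.1) r j
                * ((∑ e, Γ e r i u.2.1 * Jac C.ψ u.2.1 l e)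
                   - fderiv ℝ (fun y => Jac C.ψ y l i) u.2.1 (Pi.single r 1)))
            = ∑ r, Jac C.ψi (C.ψ u.2.1) r j
                * ∑ r', ∑ s, Γ' l r' s (C.ψ u.2.1) * Jac C.ψ u.2.1 r' r
                    * Jac C.ψ u.2.1 s i := by
              refine Finset.sum_congr rfl fun r _ => ?_
              rw [← hΓlaw u.2.1 hu2 l r i]
          _ = ∑ r, ∑ r', ∑ s, Γ' l r' s (C.ψ u.2.1) * Jac C.ψ u.2.1 s i
                * (Jac C.ψ u.2.1 r' r * Jac C.ψi (C.ψ u.2.1) r j) := by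
              refine Finset.sum_congr rfl fun r _ => ?_
              simp only [Finset.mul_sum]
              exact Finset.sum_congr rfl fun r' _ => Finset.sum_congr rfl fun s _ => by ring
          _ = ∑ r', ∑ s, ∑ r, Γ' l r' s (C.ψ u.2.1) * Jac C.ψ u.2.1 s i
                * (Jac C.ψ u.2.1 r' r * Jac C.ψi (C.ψ u.2.1) r j) := (sum_comm3 _).symm
          _ = ∑ r', ∑ s, Γ' l r' s (C.ψ u.2.1) * Jac C.ψ u.2.1 s i
                * (if r' = j then (1:ℝ) else 0) := by
              refine Finset.sum_congr rfl fun r' _ => Finset.sum_congr rfl fun s _ => ?_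
              rw [← Finset.mul_sum, dKψ2 r' j]
          _ = ∑ k, Γ' l j k (C.ψ u.2.1) * Jac C.ψ u.2.1 k i := by
              refine (Finset.sum_eq_single j ?_ ?_).trans ?_
              · intro r' _ hr'
                exact Finset.sum_eq_zero fun s _ => by simp [hr']
              · intro hj; exact absurd (Finset.mem_univ j) hj
              · exact Finset.sum_congr rfl fun s _ => by simp
      have hinner : ∀ q : Fin n, (∑ l, Jac C.ψi (C.ψ u.2.1) q l
            * ∑ k, Γ' l j k (C.ψ u.2.1) * Jac C.ψ u.2.1 k i)
          = (∑ r, Jac C.ψi (C.ψ u.2.1) r j * Γ q r i u.2.1)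
            + fderiv ℝ (fun s => Jac C.ψi (C.ψ s) q j) u.2.1 (Pi.single i 1) := by
        intro q
        calc (∑ l, Jac C.ψi (C.ψ u.2.1) q l
              * ∑ k, Γ' l j k (C.ψ u.2.1) * Jac C.ψ u.2.1 k i)
            = ∑ l, ∑ r, Jac C.ψi (C.ψ u.2.1) q l * (Jac C.ψi (C.ψ u.2.1) r j
                * ((∑ e, Γ e r i u.2.1 * Jac C.ψ u.2.1 l e)
                   - fderiv ℝ (fun y => Jac C.ψ y l i) u.2.1 (Pi.single r 1))) := by
              refine Finset.sum_congr rfl fun l _ => ?_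
              rw [hstar l, Finset.mul_sum]
          _ = ∑ r, ∑ l, Jac C.ψi (C.ψ u.2.1) q l * (Jac C.ψi (C.ψ u.2.1) r j
                * ((∑ e, Γ e r i u.2.1 * Jac C.ψ u.2.1 l e)
                   - fderiv ℝ (fun y => Jac C.ψ y l i) u.2.1 (Pi.single r 1))) :=
              Finset.sum_comm
          _ = ∑ r, ((∑ l, ∑ e, Γ e r i u.2.1 * Jac C.ψi (C.ψ u.2.1) r j
                  * (Jac C.ψi (C.ψ u.2.1) q l * Jac C.ψ u.2.1 l e))
                - Jac C.ψi (C.ψ u.2.1) r j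
                  * ∑ l, Jac C.ψi (C.ψ u.2.1) q l
                      * fderiv ℝ (fun s => Jac C.ψ s l i) u.2.1 (Pi.single r 1)) := by
              refine Finset.sum_congr rfl fun r _ => ?_
              rw [Finset.mul_sum, ← Finset.sum_sub_distrib]
              refine Finset.sum_congr rfl fun l _ => ?_
              calc Jac C.ψi (C.ψ u.2.1) q l * (Jac C.ψi (C.ψ u.2.1) r j
                    * ((∑ e, Γ e r i u.2.1 * Jac C.ψ u.2.1 l e)
                       - fderiv ℝ (fun y => Jac C.ψ y l i) u.2.1 (Pi.single r 1)))
                  = Jac C.ψi (C.ψ u.2.1) q l * (Jac C.ψi (C.ψ u.2.1) r j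
                      * ∑ e, Γ e r i u.2.1 * Jac C.ψ u.2.1 l e)
                    - Jac C.ψi (C.ψ u.2.1) r j * (Jac C.ψi (C.ψ u.2.1) q l
                      * fderiv ℝ (fun s => Jac C.ψ s l i) u.2.1 (Pi.single r 1)) := by
                    ring
                _ = (∑ e, Γ e r i u.2.1 * Jac C.ψi (C.ψ u.2.1) r j
                      * (Jac C.ψi (C.ψ u.2.1) q l * Jac C.ψ u.2.1 l e))
                    - Jac C.ψi (C.ψ u.2.1) r j * (Jac C.ψi (C.ψ u.2.1) q l
                      * fderiv ℝ (fun s => Jac C.ψ s l i) u.2.1 (Pi.single r 1)) := by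
                    congr 1
                    rw [Finset.mul_sum, Finset.mul_sum]
                    exact Finset.sum_congr rfl fun e _ => by ring
          _ = (∑ r, Jac C.ψi (C.ψ u.2.1) r j * Γ q r i u.2.1)
              + fderiv ℝ (fun s => Jac C.ψi (C.ψ s) q j) u.2.1 (Pi.single i 1) := by
              rw [Finset.sum_sub_distrib, hKiM q, sub_neg_eq_add]
              congr 1
              refine Finset.sum_congr rfl fun r _ => ?_
              calc (∑ l, ∑ e, Γ e r i u.2.1 * Jac C.ψi (C.ψ u.2.1) r j
                      * (Jac C.ψi (C.ψ u.2.1) q l * Jac C.ψ u.2.1 l e))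
                  = ∑ e, ∑ l, Γ e r i u.2.1 * Jac C.ψi (C.ψ u.2.1) r j
                      * (Jac C.ψi (C.ψ u.2.1) q l * Jac C.ψ u.2.1 l e) := Finset.sum_comm
                _ = ∑ e, Γ e r i u.2.1 * Jac C.ψi (C.ψ u.2.1) r j
                      * ∑ l, Jac C.ψi (C.ψ u.2.1) q l * Jac C.ψ u.2.1 l e := by
                    exact Finset.sum_congr rfl fun e _ => (Finset.mul_sum _ _ _).symm
                _ = ∑ e, Γ e r i u.2.1 * Jac C.ψi (C.ψ u.2.1) r j
                      * (if q = e then (1:ℝ) else 0) := by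
                    exact Finset.sum_congr rfl fun e _ => by rw [dKψ q e]
                _ = Jac C.ψi (C.ψ u.2.1) r j * Γ q r i u.2.1 := by
                    simp [mul_comm]
      rw [Phi_p_fderivX C hu1 hu2 b j i]
      simp only [berN, JetChange.Φ]
      calc (∑ k, (-∑ l, Γ' l j k (C.ψ u.2.1)
              * ∑ c, ∑ q, Jac C.φ u.1 b c * Jac C.ψi (C.ψ u.2.1) q l * u.2.2 c q)
            * Jac C.ψ u.2.1 k i)
          = ∑ k, ∑ l, ∑ c, ∑ q, -(Γ' l j k (C.ψ u.2.1)
              * (Jac C.φ u.1 b c * Jac C.ψi (C.ψ u.2.1) q l * u.2.2 c q)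
              * Jac C.ψ u.2.1 k i) := by
            refine Finset.sum_congr rfl fun k _ => ?_
            rw [neg_mul, Finset.sum_mul, ← Finset.sum_neg_distrib]
            refine Finset.sum_congr rfl fun l _ => ?_
            have h3 : Γ' l j k (C.ψ u.2.1)
                * (∑ c, ∑ q, Jac C.φ u.1 b c * Jac C.ψi (C.ψ u.2.1) q l * u.2.2 c q)
                * Jac C.ψ u.2.1 k i
                = ∑ c, ∑ q, Γ' l j k (C.ψ u.2.1)
                    * (Jac C.φ u.1 b c * Jac C.ψi (C.ψ u.2.1) q l * u.2.2 c q)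
                    * Jac C.ψ u.2.1 k i := by
              rw [Finset.mul_sum, Finset.sum_mul]
              refine Finset.sum_congr rfl fun c _ => ?_
              rw [Finset.mul_sum, Finset.sum_mul]
            rw [h3]
            simp only [← Finset.sum_neg_distrib]
        _ = ∑ c, ∑ q, ∑ l, ∑ k, -(Γ' l j k (C.ψ u.2.1)
              * (Jac C.φ u.1 b c * Jac C.ψi (C.ψ u.2.1) q l * u.2.2 c q)
              * Jac C.ψ u.2.1 k i) := by
            rw [sum_comm3]
            refine Finset.sum_congr rfl fun c _ => ?_
            rw [sum_comm3]
            exact Finset.sum_congr rfl fun q _ => Finset.sum_comm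
        _ = ∑ c, ∑ q, -((Jac C.φ u.1 b c * u.2.2 c q)
              * ∑ l, Jac C.ψi (C.ψ u.2.1) q l
                  * ∑ k, Γ' l j k (C.ψ u.2.1) * Jac C.ψ u.2.1 k i) := by
            refine Finset.sum_congr rfl fun c _ => Finset.sum_congr rfl fun q _ => ?_
            rw [Finset.mul_sum, ← Finset.sum_neg_distrib]
            refine Finset.sum_congr rfl fun l _ => ?_
            rw [Finset.mul_sum, Finset.mul_sum, ← Finset.sum_neg_distrib]
            exact Finset.sum_congr rfl fun k _ => by ring
        _ = ∑ c, ∑ q, -((Jac C.φ u.1 b c * u.2.2 c q)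
              * ((∑ r, Jac C.ψi (C.ψ u.2.1) r j * Γ q r i u.2.1)
                 + fderiv ℝ (fun s => Jac C.ψi (C.ψ s) q j) u.2.1 (Pi.single i 1))) := by
            refine Finset.sum_congr rfl fun c _ => Finset.sum_congr rfl fun q _ => ?_
            rw [hinner q]
        _ = (∑ c, ∑ q, ∑ r, -(Jac C.φ u.1 b c * u.2.2 c q
                * (Jac C.ψi (C.ψ u.2.1) r j * Γ q r i u.2.1)))
            - ∑ c, ∑ q, Jac C.φ u.1 b c
                * fderiv ℝ (fun s => Jac C.ψi (C.ψ s) q j) u.2.1 (Pi.single i 1)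
                * u.2.2 c q := by
            rw [← Finset.sum_sub_distrib]
            refine Finset.sum_congr rfl fun c _ => ?_
            rw [← Finset.sum_sub_distrib]
            refine Finset.sum_congr rfl fun q _ => ?_
            rw [mul_add, neg_add, Finset.mul_sum, ← Finset.sum_neg_distrib,
              sub_eq_add_neg]
            exact congrArg₂ (· + ·) (Finset.sum_congr rfl fun r _ => by ring) (by ring)
        _ = (∑ c, ∑ k, (-∑ l, Γ l k i u.2.1 * u.2.2 c l) * Jac C.φ u.1 b c
              * Jac C.ψi (C.ψ u.2.1) k j)
            - ∑ c, ∑ k, Jac C.φ u.1 b c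
                * fderiv ℝ (fun x => Jac C.ψi (C.ψ x) k j) u.2.1 (Pi.single i 1)
                * u.2.2 c k := by
            congr 1
            refine Finset.sum_congr rfl fun c _ => ?_
            rw [Finset.sum_comm]
            refine Finset.sum_congr rfl fun k _ => ?_
            rw [neg_mul, neg_mul, Finset.sum_mul, Finset.sum_mul, ← Finset.sum_neg_distrib]
            exact Finset.sum_congr rfl fun l _ => by ring
  · -- A3 transformation law
    intro u hu a i b j c
    have hu1 : u.1 ∈ C.U := hu.1
    have hu2 : u.2.1 ∈ C.V := hu.2.1
    have dJφ : ∀ a' e, (∑ d, Jac C.φi (C.φ u.1) a' d * Jac C.φ u.1 d e)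
        = if a' = e then (1:ℝ) else 0 :=
      diffeo_delta C.hUopen C.hU'open C.hφ C.hφi C.hφmaps C.hφleft hu1
    have dKψ : ∀ j' i', (∑ k, Jac C.ψi (C.ψ u.2.1) j' k * Jac C.ψ u.2.1 k i')
        = if j' = i' then (1:ℝ) else 0 :=
      diffeo_delta C.hVopen C.hV'open C.hψ C.hψi C.hψmaps C.hψleft hu2
    simp only [berD, JetChange.Φ]
    have key : (∑ d, ∑ k, ∑ l, ∑ f, ∑ g,
        -((if l = k then (1:ℝ) else 0) * χ' d f g (C.φ u.1))
          * Jac C.φi (C.φ u.1) a d * Jac C.ψ u.2.1 k i * Jac C.ψi (C.ψ u.2.1) j l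
          * Jac C.φ u.1 f b * Jac C.φ u.1 g c)
        = -((if j = i then (1:ℝ) else 0) * χ a b c u.1)
          + (if j = i then (1:ℝ) else 0)
            * ∑ d, Jac C.φi (C.φ u.1) a d
                * fderiv ℝ (fun s => Jac C.φ s d c) u.1 (Pi.single b 1) := by
      calc (∑ d, ∑ k, ∑ l, ∑ f, ∑ g,
          -((if l = k then (1:ℝ) else 0) * χ' d f g (C.φ u.1))
            * Jac C.φi (C.φ u.1) a d * Jac C.ψ u.2.1 k i * Jac C.ψi (C.ψ u.2.1) j l
            * Jac C.φ u.1 f b * Jac C.φ u.1 g c)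
          = ∑ d, ∑ k, -(Jac C.φi (C.φ u.1) a d
              * (Jac C.ψi (C.ψ u.2.1) j k * Jac C.ψ u.2.1 k i)
              * ∑ e, ∑ f, χ' d e f (C.φ u.1) * Jac C.φ u.1 e b * Jac C.φ u.1 f c) := by
            refine Finset.sum_congr rfl fun d _ => Finset.sum_congr rfl fun k _ => ?_
            refine (Finset.sum_eq_single k ?_ ?_).trans ?_
            · intro l _ hlk
              exact Finset.sum_eq_zero fun f _ => Finset.sum_eq_zero fun g _ => by simp [hlk]
            · intro hk; exact absurd (Finset.mem_univ k) hk
            · simp only [Finset.mul_sum, ← Finset.sum_neg_distrib]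
              exact Finset.sum_congr rfl fun f _ => Finset.sum_congr rfl fun g _ => by
                simp only [if_true]; ring
        _ = ∑ d, -(Jac C.φi (C.φ u.1) a d * (if j = i then (1:ℝ) else 0)
              * ∑ e, ∑ f, χ' d e f (C.φ u.1) * Jac C.φ u.1 e b * Jac C.φ u.1 f c) := by
            refine Finset.sum_congr rfl fun d _ => ?_
            have h1 : ∀ (A S : ℝ) (KK : Fin n → ℝ),
                (∑ k, -(A * KK k * S)) = -(A * (∑ k, KK k) * S) := by
              intro A S KK
              rw [Finset.sum_neg_distrib]
              congr 1
              rw [Finset.mul_sum, Finset.sum_mul]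
            rw [h1, dKψ j i]
        _ = ∑ d, -(Jac C.φi (C.φ u.1) a d * (if j = i then (1:ℝ) else 0)
              * ((∑ p, χ p b c u.1 * Jac C.φ u.1 d p)
                 - fderiv ℝ (fun s => Jac C.φ s d c) u.1 (Pi.single b 1))) := by
            refine Finset.sum_congr rfl fun d _ => ?_
            rw [hχlaw u.1 hu1 d b c]
        _ = (∑ d, ∑ p, -((if j = i then (1:ℝ) else 0) * χ p b c u.1)
              * (Jac C.φi (C.φ u.1) a d * Jac C.φ u.1 d p))
            + (if j = i then (1:ℝ) else 0)
              * ∑ d, Jac C.φi (C.φ u.1) a d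
                  * fderiv ℝ (fun s => Jac C.φ s d c) u.1 (Pi.single b 1) := by
            rw [Finset.mul_sum, ← Finset.sum_add_distrib]
            refine Finset.sum_congr rfl fun d _ => ?_
            rw [mul_sub, neg_sub, Finset.mul_sum, sub_eq_add_neg, ← Finset.sum_neg_distrib,
              add_comm]
            congr 1
            · exact Finset.sum_congr rfl fun p _ => by ring
            · ring
        _ = -((if j = i then (1:ℝ) else 0) * χ a b c u.1)
            + (if j = i then (1:ℝ) else 0)
              * ∑ d, Jac C.φi (C.φ u.1) a d
                  * fderiv ℝ (fun s => Jac C.φ s d c) u.1 (Pi.single b 1) := by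
            congr 1
            rw [Finset.sum_comm]
            calc ∑ p, ∑ d, -((if j = i then (1:ℝ) else 0) * χ p b c u.1)
                  * (Jac C.φi (C.φ u.1) a d * Jac C.φ u.1 d p)
                = ∑ p, -((if j = i then (1:ℝ) else 0) * χ p b c u.1)
                    * ∑ d, Jac C.φi (C.φ u.1) a d * Jac C.φ u.1 d p := by
                  exact Finset.sum_congr rfl fun p _ => (Finset.mul_sum _ _ _).symm
              _ = ∑ p, -((if j = i then (1:ℝ) else 0) * χ p b c u.1)
                    * (if a = p then (1:ℝ) else 0) := by
                  exact Finset.sum_congr rfl fun p _ => by rw [dJφ a p]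
              _ = -((if j = i then (1:ℝ) else 0) * χ a b c u.1) := by
                  simp
    rw [key]
    ring
  · -- H3 transformation law
    intro u hu a i b j k
    have hu1 : u.1 ∈ C.U := hu.1
    have hu2 : u.2.1 ∈ C.V := hu.2.1
    have dJφ : ∀ a' e, (∑ d, Jac C.φi (C.φ u.1) a' d * Jac C.φ u.1 d e)
        = if a' = e then (1:ℝ) else 0 :=
      diffeo_delta C.hUopen C.hU'open C.hφ C.hφi C.hφmaps C.hφleft hu1
    have dKψ : ∀ j' i', (∑ l, Jac C.ψi (C.ψ u.2.1) j' l * Jac C.ψ u.2.1 l i')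
        = if j' = i' then (1:ℝ) else 0 :=
      diffeo_delta C.hVopen C.hV'open C.hψ C.hψi C.hψmaps C.hψleft hu2
    simp only [berD, JetChange.Φ]
    -- abbreviations
    have hS2 : (∑ l, Jac C.ψi (C.ψ u.2.1) j l
          * fderiv ℝ (fun y => Jac C.ψ y l k) u.2.1 (Pi.single i 1))
        = -∑ r, ∑ s, Jac C.ψ u.2.1 r i * Jac C.ψ u.2.1 s k
            * fderiv ℝ (fun y => Jac C.ψi y j s) (C.ψ u.2.1) (Pi.single r 1) := by
      have I1 := jac_prod_identity C.hVopen C.hV'open C.hψ C.hψi C.hψmaps C.hψleft hu2 j k i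
      have h1 : (∑ l, Jac C.ψi (C.ψ u.2.1) j l
            * fderiv ℝ (fun y => Jac C.ψ y l k) u.2.1 (Pi.single i 1))
          = -∑ l, fderiv ℝ (fun s => Jac C.ψi (C.ψ s) j l) u.2.1 (Pi.single i 1)
              * Jac C.ψ u.2.1 l k := by linarith
      rw [h1]
      congr 1
      calc (∑ l, fderiv ℝ (fun s => Jac C.ψi (C.ψ s) j l) u.2.1 (Pi.single i 1)
              * Jac C.ψ u.2.1 l k)
          = ∑ l, (∑ s, Jac C.ψ u.2.1 s i
              * fderiv ℝ (fun y => Jac C.ψi y j l) (C.ψ u.2.1) (Pi.single s 1))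
              * Jac C.ψ u.2.1 l k := by
            refine Finset.sum_congr rfl fun l _ => ?_
            rw [jacg_comp_fderiv C.hVopen C.hV'open C.hψ C.hψi C.hψmaps hu2 j l i]
        _ = ∑ l, ∑ s, Jac C.ψ u.2.1 s i * fderiv ℝ (fun y => Jac C.ψi y j l)
              (C.ψ u.2.1) (Pi.single s 1) * Jac C.ψ u.2.1 l k := by
            refine Finset.sum_congr rfl fun l _ => ?_
            rw [Finset.sum_mul]
        _ = ∑ s, ∑ l, Jac C.ψ u.2.1 s i * fderiv ℝ (fun y => Jac C.ψi y j l)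
              (C.ψ u.2.1) (Pi.single s 1) * Jac C.ψ u.2.1 l k := Finset.sum_comm
        _ = ∑ r, ∑ s, Jac C.ψ u.2.1 r i * Jac C.ψ u.2.1 s k
              * fderiv ℝ (fun y => Jac C.ψi y j s) (C.ψ u.2.1) (Pi.single r 1) :=
            Finset.sum_congr rfl fun r _ => Finset.sum_congr rfl fun s _ => by ring
    have key : (∑ f, ∑ r, ∑ g, ∑ l, ∑ s,
        (if f = g then (1:ℝ) else 0) * Γ' l r s (C.ψ u.2.1)
          * Jac C.φi (C.φ u.1) a f * Jac C.ψ u.2.1 r i * Jac C.ψi (C.ψ u.2.1) j l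
          * Jac C.φ u.1 g b * Jac C.ψ u.2.1 s k)
        = (if a = b then (1:ℝ) else 0) * (Γ j i k u.2.1
            - ∑ l, Jac C.ψi (C.ψ u.2.1) j l
                * fderiv ℝ (fun y => Jac C.ψ y l k) u.2.1 (Pi.single i 1)) := by
      calc (∑ f, ∑ r, ∑ g, ∑ l, ∑ s,
          (if f = g then (1:ℝ) else 0) * Γ' l r s (C.ψ u.2.1)
            * Jac C.φi (C.φ u.1) a f * Jac C.ψ u.2.1 r i * Jac C.ψi (C.ψ u.2.1) j l
            * Jac C.φ u.1 g b * Jac C.ψ u.2.1 s k)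
          = ∑ f, ∑ r, (Jac C.φi (C.φ u.1) a f * Jac C.φ u.1 f b)
              * ∑ l, ∑ s, Γ' l r s (C.ψ u.2.1) * Jac C.ψ u.2.1 r i
                  * Jac C.ψi (C.ψ u.2.1) j l * Jac C.ψ u.2.1 s k := by
            refine Finset.sum_congr rfl fun f _ => Finset.sum_congr rfl fun r _ => ?_
            refine (Finset.sum_eq_single f ?_ ?_).trans ?_
            · intro g _ hgf
              exact Finset.sum_eq_zero fun l _ => Finset.sum_eq_zero fun s _ => by
                simp [Ne.symm hgf]
            · intro hf; exact absurd (Finset.mem_univ f) hf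
            · simp only [Finset.mul_sum]
              exact Finset.sum_congr rfl fun l _ => Finset.sum_congr rfl fun s _ => by
                simp only [if_true]; ring
        _ = (∑ f, Jac C.φi (C.φ u.1) a f * Jac C.φ u.1 f b)
            * ∑ r, ∑ l, ∑ s, Γ' l r s (C.ψ u.2.1) * Jac C.ψ u.2.1 r i
                * Jac C.ψi (C.ψ u.2.1) j l * Jac C.ψ u.2.1 s k := by
            rw [Finset.sum_mul_sum]
        _ = (if a = b then (1:ℝ) else 0)
            * ∑ r, ∑ l, ∑ s, Γ' l r s (C.ψ u.2.1) * Jac C.ψ u.2.1 r i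
                * Jac C.ψi (C.ψ u.2.1) j l * Jac C.ψ u.2.1 s k := by rw [dJφ a b]
        _ = (if a = b then (1:ℝ) else 0) * (Γ j i k u.2.1
              - ∑ l, Jac C.ψi (C.ψ u.2.1) j l
                  * fderiv ℝ (fun y => Jac C.ψ y l k) u.2.1 (Pi.single i 1)) := by
            congr 1
            calc (∑ r, ∑ l, ∑ s, Γ' l r s (C.ψ u.2.1) * Jac C.ψ u.2.1 r i
                    * Jac C.ψi (C.ψ u.2.1) j l * Jac C.ψ u.2.1 s k)
                = ∑ l, ∑ r, ∑ s, Γ' l r s (C.ψ u.2.1) * Jac C.ψ u.2.1 r i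
                    * Jac C.ψi (C.ψ u.2.1) j l * Jac C.ψ u.2.1 s k := Finset.sum_comm
              _ = ∑ l, Jac C.ψi (C.ψ u.2.1) j l
                    * ∑ r, ∑ s, Γ' l r s (C.ψ u.2.1) * Jac C.ψ u.2.1 r i
                        * Jac C.ψ u.2.1 s k := by
                  refine Finset.sum_congr rfl fun l _ => ?_
                  simp only [Finset.mul_sum]
                  exact Finset.sum_congr rfl fun r _ => Finset.sum_congr rfl fun s _ => by
                    ring
              _ = ∑ l, Jac C.ψi (C.ψ u.2.1) j l
                    * ((∑ e, Γ e i k u.2.1 * Jac C.ψ u.2.1 l e)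
                       - fderiv ℝ (fun y => Jac C.ψ y l k) u.2.1 (Pi.single i 1)) := by
                  refine Finset.sum_congr rfl fun l _ => ?_
                  rw [hΓlaw u.2.1 hu2 l i k]
              _ = (∑ l, ∑ e, Γ e i k u.2.1 * (Jac C.ψi (C.ψ u.2.1) j l * Jac C.ψ u.2.1 l e))
                  - ∑ l, Jac C.ψi (C.ψ u.2.1) j l
                      * fderiv ℝ (fun y => Jac C.ψ y l k) u.2.1 (Pi.single i 1) := by
                  rw [← Finset.sum_sub_distrib]
                  refine Finset.sum_congr rfl fun l _ => ?_
                  rw [mul_sub]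
                  congr 1
                  rw [Finset.mul_sum]
                  exact Finset.sum_congr rfl fun e _ => by ring
              _ = Γ j i k u.2.1 - ∑ l, Jac C.ψi (C.ψ u.2.1) j l
                      * fderiv ℝ (fun y => Jac C.ψ y l k) u.2.1 (Pi.single i 1) := by
                  congr 1
                  calc (∑ l, ∑ e, Γ e i k u.2.1
                          * (Jac C.ψi (C.ψ u.2.1) j l * Jac C.ψ u.2.1 l e))
                      = ∑ e, Γ e i k u.2.1
                          * ∑ l, Jac C.ψi (C.ψ u.2.1) j l * Jac C.ψ u.2.1 l e := by
                        rw [Finset.sum_comm]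
                        exact Finset.sum_congr rfl fun e _ => (Finset.mul_sum _ _ _).symm
                    _ = ∑ e, Γ e i k u.2.1 * (if j = e then (1:ℝ) else 0) := by
                        exact Finset.sum_congr rfl fun e _ => by rw [dKψ j e]
                    _ = Γ j i k u.2.1 := by simp
    rw [key, hS2]
    ring

end Statements
end

section
/- Let D be an N-linear connection on E with torsion 𝕋(X,Y) = D_X Y − D_Y X − [X,Y]. Then on adapted frame pairs involving δ/δt: 𝕋(δ/δt^b, δ/δt^a) = (A^c_{ab} − A^c_{ba}) δ/δt^c + R^{(f)}_{(r)ab} ∂/∂p_r^f; 𝕋(δ/δx^j, δ/δt^a) = H^c_{aj} δ/δt^c − A^k_{ja} δ/δx^k + R^{(f)}_{(r)aj} ∂/∂p_r^f; and 𝕋(∂/∂p_j^b, δ/δt^a) = C^{c(j)}_{a(b)} δ/δt^c + (B^{(f)(j)}_{(r)a(b)} + A^{(f)(j)}_{(r)(b)a}) ∂/∂p_r^f. -/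
set_option linter.unreachableTactic false
set_option linter.unnecessarySeqFocus false
set_option linter.unusedTactic false

namespace StmtAux

variable {m n : ℕ}

lemma hasFDerivAt_dT (N : NLC m n) (a : Fin m) (u : E m n)
    (h : ∀ f r, DifferentiableAt ℝ (N.N1 f r a) u) :
    HasFDerivAt (N.dT a)
      ((0 : E m n →L[ℝ] (Fin m → ℝ)).prod
        ((0 : E m n →L[ℝ] (Fin n → ℝ)).prod
          (ContinuousLinearMap.pi fun f => ContinuousLinearMap.pi fun r =>
            -(fderiv ℝ (N.N1 f r a) u)))) u := by
  apply HasFDerivAt.prodMk (hasFDerivAt_const _ _)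
  apply HasFDerivAt.prodMk (hasFDerivAt_const _ _)
  apply hasFDerivAt_pi.2
  intro f
  apply hasFDerivAt_pi.2
  intro r
  exact ((h f r).hasFDerivAt).neg

lemma fderiv_dT_apply (N : NLC m n) (a : Fin m) (u w : E m n)
    (h : ∀ f r, DifferentiableAt ℝ (N.N1 f r a) u) :
    fderiv ℝ (N.dT a) u w = (0, 0, fun f r => -(fderiv ℝ (N.N1 f r a) u w)) := by
  rw [(hasFDerivAt_dT N a u h).fderiv]; rfl

lemma hasFDerivAt_dX (N : NLC m n) (j : Fin n) (u : E m n)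
    (h : ∀ f r, DifferentiableAt ℝ (N.N2 f r j) u) :
    HasFDerivAt (N.dX j)
      ((0 : E m n →L[ℝ] (Fin m → ℝ)).prod
        ((0 : E m n →L[ℝ] (Fin n → ℝ)).prod
          (ContinuousLinearMap.pi fun f => ContinuousLinearMap.pi fun r =>
            -(fderiv ℝ (N.N2 f r j) u)))) u := by
  apply HasFDerivAt.prodMk (hasFDerivAt_const _ _)
  apply HasFDerivAt.prodMk (hasFDerivAt_const _ _)
  apply hasFDerivAt_pi.2
  intro f
  apply hasFDerivAt_pi.2
  intro r
  exact ((h f r).hasFDerivAt).neg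

lemma fderiv_dX_apply (N : NLC m n) (j : Fin n) (u w : E m n)
    (h : ∀ f r, DifferentiableAt ℝ (N.N2 f r j) u) :
    fderiv ℝ (N.dX j) u w = (0, 0, fun f r => -(fderiv ℝ (N.N2 f r j) u w)) := by
  rw [(hasFDerivAt_dX N j u h).fderiv]; rfl

end StmtAux

namespace StmtAux2
open StmtAux

variable {m n : ℕ}

lemma delT_const (N : NLC m n) (c : Fin m) (k : ℝ) (u : E m n) :
    N.delT c (fun _ => k) u = 0 := by
  simp [NLC.delT]

lemma delX_const (N : NLC m n) (k : Fin n) (r : ℝ) (u : E m n) :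
    N.delX k (fun _ => r) u = 0 := by
  simp [NLC.delX]

lemma delP_const (c : Fin m) (k : Fin n) (r : ℝ) (u : E m n) :
    delP c k (fun _ : E m n => r) u = 0 := by
  simp [delP]

lemma compT_dT (N : NLC m n) (a c : Fin m) :
    compT (N.dT a) c = fun _ => (Pi.single a 1 : Fin m → ℝ) c := rfl

lemma compX_dT (N : NLC m n) (a : Fin m) (i : Fin n) :
    compX (N.dT a) i = fun _ => (0:ℝ) := rfl

lemma compP_dT (N : NLC m n) (a f : Fin m) (r : Fin n) :
    compP N (N.dT a) f r = fun _ => (0:ℝ) := by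
  funext u
  simp [compP, NLC.dT, Pi.single_apply, mul_ite, Finset.sum_ite_eq']

lemma compT_dX (N : NLC m n) (j : Fin n) (c : Fin m) :
    compT (N.dX j) c = fun _ => (0:ℝ) := rfl

lemma compX_dX (N : NLC m n) (j i : Fin n) :
    compX (N.dX j) i = fun _ => (Pi.single j 1 : Fin n → ℝ) i := rfl

lemma compP_dX (N : NLC m n) (j : Fin n) (f : Fin m) (r : Fin n) :
    compP N (N.dX j) f r = fun _ => (0:ℝ) := by
  funext u
  simp [compP, NLC.dX, Pi.single_apply, mul_ite, Finset.sum_ite_eq']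

lemma compT_dP (b : Fin m) (j : Fin n) (c : Fin m) :
    compT (dPfield m n b j) c = fun _ => (0:ℝ) := rfl

lemma compX_dP (b : Fin m) (j : Fin n) (i : Fin n) :
    compX (dPfield m n b j) i = fun _ => (0:ℝ) := rfl

lemma compP_dP (N : NLC m n) (b : Fin m) (j : Fin n) (f : Fin m) (r : Fin n) :
    compP N (dPfield m n b j) f r
      = fun _ => (Pi.single b (Pi.single j 1) : Fin m → Fin n → ℝ) f r := by
  funext u
  simp [compP, dPfield, dPnat]

lemma sum_smul_dT (N : NLC m n) (g : Fin m → ℝ) (u : E m n) :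
    ∑ c, g c • N.dT c u
      = (g, 0, fun f r => -∑ c, N.N1 f r c u * g c) := by
  refine Prod.ext ?_ (Prod.ext ?_ ?_)
  · funext d
    simp [NLC.dT, Prod.fst_sum, Finset.sum_apply, Pi.single_apply, mul_ite,
      Finset.sum_ite_eq, Finset.sum_ite_eq']
  · simp [NLC.dT, Prod.snd_sum, Prod.fst_sum]
  · funext f r
    simp [NLC.dT, Prod.snd_sum, Finset.sum_apply, mul_comm]

lemma sum_smul_dX (N : NLC m n) (g : Fin n → ℝ) (u : E m n) :
    ∑ k, g k • N.dX k u
      = (0, g, fun f r => -∑ k, N.N2 f r k u * g k) := by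
  refine Prod.ext ?_ (Prod.ext ?_ ?_)
  · simp [NLC.dX, Prod.fst_sum]
  · funext i
    simp [NLC.dX, Prod.snd_sum, Prod.fst_sum, Finset.sum_apply, Pi.single_apply,
      mul_ite, Finset.sum_ite_eq, Finset.sum_ite_eq']
  · funext f r
    simp [NLC.dX, Prod.snd_sum, Finset.sum_apply, mul_comm]

lemma sum_smul_dP (g : Fin m → Fin n → ℝ) :
    ∑ f, ∑ r, g f r • dPnat m n f r = ((0:Fin m → ℝ), (0:Fin n → ℝ), g) := by
  refine Prod.ext ?_ (Prod.ext ?_ ?_)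
  · simp [dPnat, Prod.fst_sum]
  · simp [dPnat, Prod.snd_sum, Prod.fst_sum]
  · funext f r
    simp [dPnat, Prod.snd_sum, Finset.sum_apply, Pi.single_apply, ite_apply, mul_ite,
      Finset.sum_ite_eq, Finset.sum_ite_eq']

end StmtAux2

namespace StmtAux3
open StmtAux StmtAux2

variable {m n : ℕ}

lemma lie_dT_dT (N : NLC m n) (a b : Fin m) (u : E m n)
    (h : ∀ f r c, DifferentiableAt ℝ (N.N1 f r c) u) :
    lie (N.dT b) (N.dT a) u = (0, 0, fun f r => -(N.R1 f r a b u)) := by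
  unfold lie
  rw [fderiv_dT_apply N a u _ (fun f r => h f r a),
    fderiv_dT_apply N b u _ (fun f r => h f r b)]
  refine Prod.ext (by simp) (Prod.ext (by simp) ?_)
  funext f r
  simp [NLC.R1, NLC.delT]
  ring

lemma lie_dX_dT (N : NLC m n) (a : Fin m) (j : Fin n) (u : E m n)
    (h1 : ∀ f r, DifferentiableAt ℝ (N.N1 f r a) u)
    (h2 : ∀ f r, DifferentiableAt ℝ (N.N2 f r j) u) :
    lie (N.dX j) (N.dT a) u = (0, 0, fun f r => -(N.Rmix f r a j u)) := by
  unfold lie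
  rw [fderiv_dT_apply N a u _ h1, fderiv_dX_apply N j u _ h2]
  refine Prod.ext (by simp) (Prod.ext (by simp) ?_)
  funext f r
  simp [NLC.Rmix, NLC.delT, NLC.delX]
  ring

lemma lie_dP_dT (N : NLC m n) (a b : Fin m) (j : Fin n) (u : E m n)
    (h1 : ∀ f r, DifferentiableAt ℝ (N.N1 f r a) u) :
    lie (dPfield m n b j) (N.dT a) u = (0, 0, fun f r => -(N.B1 f r a b j u)) := by
  unfold lie
  rw [fderiv_dT_apply N a u _ h1]
  have : fderiv ℝ (dPfield m n b j) u = 0 := fderiv_const_apply _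
  rw [this]
  refine Prod.ext (by simp) (Prod.ext (by simp) ?_)
  funext f r
  simp [NLC.B1, delP, dPfield]

lemma covD_dT (N : NLC m n) (D : NLinConn m n) (b : Fin m) (Y : E m n → E m n)
    (u : E m n) : covD N D (N.dT b) Y u = covT N D b Y u := by
  unfold covD
  simp [compT_dT, compX_dT, compP_dT, Pi.single_apply, ite_smul,
    Finset.sum_ite_eq, Finset.sum_ite_eq']

lemma covD_dX (N : NLC m n) (D : NLinConn m n) (j : Fin n) (Y : E m n → E m n)
    (u : E m n) : covD N D (N.dX j) Y u = covX N D j Y u := by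
  unfold covD
  simp [compT_dX, compX_dX, compP_dX, Pi.single_apply, ite_smul,
    Finset.sum_ite_eq, Finset.sum_ite_eq']

lemma covD_dP (N : NLC m n) (D : NLinConn m n) (b : Fin m) (j : Fin n)
    (Y : E m n → E m n) (u : E m n) :
    covD N D (dPfield m n b j) Y u = covP N D b j Y u := by
  unfold covD
  simp [compT_dP, compX_dP, compP_dP, Pi.single_apply, ite_smul, ite_apply,
    Finset.sum_ite_eq, Finset.sum_ite_eq']

end StmtAux3

namespace StmtAux4
open StmtAux StmtAux2 StmtAux3

variable {m n : ℕ}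

lemma covT_dT_val (N : NLC m n) (D : NLinConn m n) (c a : Fin m) (u : E m n) :
    covT N D c (N.dT a) u
      = ((fun e => D.A1 e a c u), 0, fun f r => -∑ e, N.N1 f r e u * D.A1 e a c u) := by
  unfold covT fromA
  refine Prod.ext ?_ (Prod.ext ?_ ?_) <;> funext <;>
    simp [compT_dT, compX_dT, compP_dT, delT_const, Pi.single_apply, ite_mul, mul_ite,
      Finset.sum_ite_eq, Finset.sum_ite_eq']

lemma covT_dX_val (N : NLC m n) (D : NLinConn m n) (a : Fin m) (j : Fin n) (u : E m n) :
    covT N D a (N.dX j) u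
      = (0, (fun i => D.A2 i j a u), fun f r => -∑ k, N.N2 f r k u * D.A2 k j a u) := by
  unfold covT fromA
  refine Prod.ext ?_ (Prod.ext ?_ ?_) <;> funext <;>
    simp [compT_dX, compX_dX, compP_dX, delT_const, Pi.single_apply, ite_mul, mul_ite,
      Finset.sum_ite_eq, Finset.sum_ite_eq']

lemma covT_dP_val (N : NLC m n) (D : NLinConn m n) (a b : Fin m) (j : Fin n) (u : E m n) :
    covT N D a (dPfield m n b j) u
      = (0, 0, fun f r => -(D.A3 f r b j a u)) := by
  unfold covT fromA
  refine Prod.ext ?_ (Prod.ext ?_ ?_) <;> funext <;>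
    simp [compT_dP, compX_dP, compP_dP, delT_const, Pi.single_apply, ite_apply, ite_mul,
      mul_ite, Finset.sum_ite_eq, Finset.sum_ite_eq']

lemma covX_dT_val (N : NLC m n) (D : NLinConn m n) (j : Fin n) (a : Fin m) (u : E m n) :
    covX N D j (N.dT a) u
      = ((fun e => D.H1 e a j u), 0, fun f r => -∑ e, N.N1 f r e u * D.H1 e a j u) := by
  unfold covX fromA
  refine Prod.ext ?_ (Prod.ext ?_ ?_) <;> funext <;>
    simp [compT_dT, compX_dT, compP_dT, delX_const, Pi.single_apply, ite_mul, mul_ite,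
      Finset.sum_ite_eq, Finset.sum_ite_eq']

lemma covP_dT_val (N : NLC m n) (D : NLinConn m n) (b : Fin m) (j : Fin n) (a : Fin m)
    (u : E m n) :
    covP N D b j (N.dT a) u
      = ((fun e => D.C1 e a b j u), 0, fun f r => -∑ e, N.N1 f r e u * D.C1 e a b j u) := by
  unfold covP fromA
  refine Prod.ext ?_ (Prod.ext ?_ ?_) <;> funext <;>
    simp [compT_dT, compX_dT, compP_dT, delP_const, Pi.single_apply, ite_mul, mul_ite,
      Finset.sum_ite_eq, Finset.sum_ite_eq']

end StmtAux4


section Statements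

open scoped BigOperators

theorem stmt11 (m n : ℕ) (U : Set (Fin m → ℝ)) (V : Set (Fin n → ℝ))
    (hU : IsOpen U) (hV : IsOpen V) (N : NLC m n) (hN : N.SmoothOn (modelSet U V))
    (D : NLinConn m n) (hD : D.SmoothOn (modelSet U V)) :
    ∀ u ∈ modelSet U V,
      (∀ a b : Fin m,
        tors N D (N.dT b) (N.dT a) u
          = (∑ c, (D.A1 c a b u - D.A1 c b a u) • N.dT c u)
            + ∑ f, ∑ r, N.R1 f r a b u • dPnat m n f r)
      ∧ (∀ (a : Fin m) (j : Fin n),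
        tors N D (N.dX j) (N.dT a) u
          = (∑ c, D.H1 c a j u • N.dT c u) - (∑ k, D.A2 k j a u • N.dX k u)
            + ∑ f, ∑ r, N.Rmix f r a j u • dPnat m n f r)
      ∧ (∀ (a b : Fin m) (j : Fin n),
        tors N D (dPfield m n b j) (N.dT a) u
          = (∑ c, D.C1 c a b j u • N.dT c u)
            + ∑ f, ∑ r, (N.B1 f r a b j u + D.A3 f r b j a u) • dPnat m n f r) := by
  intro u hu
  have hO : IsOpen (modelSet U V) := hU.prod (hV.prod isOpen_univ)
  have hd1 : ∀ f r c, DifferentiableAt ℝ (N.N1 f r c) u := fun f r c =>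
    ((hN.1 f r c).differentiableOn (by simp)).differentiableAt (hO.mem_nhds hu)
  have hd2 : ∀ f r j, DifferentiableAt ℝ (N.N2 f r j) u := fun f r j =>
    ((hN.2 f r j).differentiableOn (by simp)).differentiableAt (hO.mem_nhds hu)
  refine ⟨fun a b => ?_, fun a j => ?_, fun a b j => ?_⟩
  · unfold tors
    rw [StmtAux3.covD_dT, StmtAux3.covD_dT, StmtAux3.lie_dT_dT N a b u hd1,
      StmtAux4.covT_dT_val, StmtAux4.covT_dT_val, StmtAux2.sum_smul_dT, StmtAux2.sum_smul_dP]
    refine Prod.ext ?_ (Prod.ext ?_ ?_) <;> funext <;>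
      simp [mul_sub, Finset.sum_sub_distrib] <;> ring
  · unfold tors
    rw [StmtAux3.covD_dX, StmtAux3.covD_dT,
      StmtAux3.lie_dX_dT N a j u (fun f r => hd1 f r a) (fun f r => hd2 f r j),
      StmtAux4.covX_dT_val, StmtAux4.covT_dX_val, StmtAux2.sum_smul_dT,
      StmtAux2.sum_smul_dX, StmtAux2.sum_smul_dP]
    refine Prod.ext ?_ (Prod.ext ?_ ?_) <;> funext <;>
      simp <;> ring_nf
  · unfold tors
    rw [StmtAux3.covD_dP, StmtAux3.covD_dT, StmtAux3.lie_dP_dT N a b j u (fun f r => hd1 f r a),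
      StmtAux4.covP_dT_val, StmtAux4.covT_dP_val, StmtAux2.sum_smul_dT, StmtAux2.sum_smul_dP]
    refine Prod.ext ?_ (Prod.ext ?_ ?_) <;> funext <;>
      simp <;> ring_nf

end Statements
end

section
/- Let D be an N-linear connection on E with torsion 𝕋(X,Y) = D_X Y − D_Y X − [X,Y]. Then: 𝕋(δ/δx^j, δ/δx^i) = (H^k_{ij} − H^k_{ji}) δ/δx^k + R^{(f)}_{(r)ij} ∂/∂p_r^f; 𝕋(∂/∂p_j^b, δ/δx^i) = C^{k(j)}_{i(b)} δ/δx^k + (B^{(f)(j)}_{(r)i(b)} + H^{(f)(j)}_{(r)(b)i}) ∂/∂p_r^f; and 𝕋(∂/∂p_j^b, ∂/∂p_i^a) = −(C^{(f)(i)(j)}_{(r)(a)(b)} − C^{(f)(j)(i)}_{(r)(b)(a)}) ∂/∂p_r^f. In particular all h_T-components of these three torsion values vanish. -/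
noncomputable section Aux

open scoped BigOperators

variable {m n : ℕ}

lemma fderiv_dX_apply (N : NLC m n) (i : Fin n) (u : E m n)
    (h : ∀ a r, DifferentiableAt ℝ (N.N2 a r i) u) (v : E m n) :
    fderiv ℝ (N.dX i) u v = (0, 0, fun a r => -(fderiv ℝ (N.N2 a r i) u v)) := by
  have h3 : HasFDerivAt (fun w : E m n => fun a : Fin m => fun r : Fin n => -(N.N2 a r i w))
      (ContinuousLinearMap.pi fun a => ContinuousLinearMap.pi fun r =>
        -(fderiv ℝ (N.N2 a r i) u)) u :=
    hasFDerivAt_pi.2 fun a => hasFDerivAt_pi.2 fun r => ((h a r).hasFDerivAt).neg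
  have hfull : HasFDerivAt (N.dX i)
      (((0 : E m n →L[ℝ] (Fin m → ℝ))).prod
        (((0 : E m n →L[ℝ] (Fin n → ℝ))).prod
          (ContinuousLinearMap.pi fun a => ContinuousLinearMap.pi fun r =>
            -(fderiv ℝ (N.N2 a r i) u)))) u := by
    have := HasFDerivAt.prodMk (hasFDerivAt_const (0 : Fin m → ℝ) u)
      (HasFDerivAt.prodMk (hasFDerivAt_const (Pi.single i 1 : Fin n → ℝ) u) h3)
    exact this
  rw [hfull.fderiv]
  rfl


lemma compT_dX (N : NLC m n) (j : Fin n) (a : Fin m) :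
    compT (N.dX j) a = fun _ => (0 : ℝ) := rfl

lemma compX_dX (N : NLC m n) (j l : Fin n) :
    compX (N.dX j) l = fun _ : E m n => (Pi.single j 1 : Fin n → ℝ) l := rfl

lemma compP_dX (N : NLC m n) (j : Fin n) (a : Fin m) (i : Fin n) :
    compP N (N.dX j) a i = fun _ => (0 : ℝ) := by
  funext u
  simp [compP, NLC.dX, Pi.single_apply, mul_ite, Finset.sum_ite_eq']

lemma compT_dP (b : Fin m) (j : Fin n) (a : Fin m) :
    compT (dPfield m n b j) a = fun _ => (0 : ℝ) := rfl

lemma compX_dP (b : Fin m) (j : Fin n) (l : Fin n) :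
    compX (dPfield m n b j) l = fun _ => (0 : ℝ) := rfl

lemma compP_dP (N : NLC m n) (b : Fin m) (j : Fin n) (a : Fin m) (i : Fin n) :
    compP N (dPfield m n b j) a i
      = fun _ => (if a = b then (if i = j then (1:ℝ) else 0) else 0) := by
  funext u
  simp [compP, dPfield, dPnat, Pi.single_apply, apply_ite (fun f : Fin n → ℝ => f i)]

lemma delX_const (N : NLC m n) (k : Fin n) (c : ℝ) (u : E m n) :
    N.delX k (fun _ => c) u = 0 := by
  simp [NLC.delX]

lemma delP_const (c : Fin m) (k : Fin n) (r : ℝ) (u : E m n) :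
    delP c k (fun _ => r) u = 0 := by
  simp [delP]

lemma triple_ext {x y : E m n} (h1 : x.1 = y.1) (h2 : x.2.1 = y.2.1)
    (h3 : x.2.2 = y.2.2) : x = y := by
  obtain ⟨x1, x2, x3⟩ := x; obtain ⟨y1, y2, y3⟩ := y
  simp_all

lemma sum_triple {ι : Type*} [Fintype ι] (F : ι → E m n) :
    ∑ k, F k = (∑ k, (F k).1, ∑ k, (F k).2.1, ∑ k, (F k).2.2) := by
  refine triple_ext
    (map_sum (AddMonoidHom.fst (Fin m → ℝ) ((Fin n → ℝ) × (Fin m → Fin n → ℝ))) F Finset.univ)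
    (map_sum ((AddMonoidHom.fst (Fin n → ℝ) (Fin m → Fin n → ℝ)).comp
      (AddMonoidHom.snd (Fin m → ℝ) ((Fin n → ℝ) × (Fin m → Fin n → ℝ)))) F Finset.univ)
    (map_sum ((AddMonoidHom.snd (Fin n → ℝ) (Fin m → Fin n → ℝ)).comp
      (AddMonoidHom.snd (Fin m → ℝ) ((Fin n → ℝ) × (Fin m → Fin n → ℝ)))) F Finset.univ)

lemma sum_dX (N : NLC m n) (c : Fin n → ℝ) (u : E m n) :
    ∑ k, c k • N.dX k u
      = (0, c, fun f r => -(∑ k, N.N2 f r k u * c k)) := by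
  rw [sum_triple]
  refine triple_ext ?_ ?_ ?_
  · simp [NLC.dX]
  · funext l
    simp [NLC.dX, Finset.sum_apply, Pi.single_apply, mul_ite, Finset.sum_ite_eq']
  · funext f r
    simp [NLC.dX, Finset.sum_apply, mul_neg, mul_comm]

lemma sum_dP (g : Fin m → Fin n → ℝ) :
    ∑ f : Fin m, ∑ r : Fin n, g f r • dPnat m n f r = ((0 : Fin m → ℝ), 0, g) := by
  have : ∀ f : Fin m, ∑ r : Fin n, g f r • dPnat m n f r
      = ((0 : Fin m → ℝ), 0, fun a => Pi.single (M := fun _ => Fin n → ℝ) f (g f) a) := by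
    intro f
    rw [sum_triple]
    refine triple_ext ?_ ?_ ?_
    · simp [dPnat]
    · simp [dPnat]
    · funext a r
      simp [dPnat, Finset.sum_apply, Pi.single_apply, apply_ite (fun h : Fin n → ℝ => h r),
        mul_ite, Finset.sum_ite_eq']
  rw [Finset.sum_congr rfl (fun f _ => this f), sum_triple]
  refine triple_ext (by simp) (by simp) ?_
  funext a r
  simp [Finset.sum_apply, Pi.single_apply, apply_ite (fun h : Fin n → ℝ => h r),
    Finset.sum_ite_eq]

lemma covX_dX_eval (N : NLC m n) (D : NLinConn m n) (k i : Fin n) (u : E m n) :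
    covX N D k (N.dX i) u
      = (0, fun l => D.H2 l i k u, fun f r => -(∑ l, N.N2 f r l u * D.H2 l i k u)) := by
  refine triple_ext ?_ ?_ ?_
  · funext a
    simp [covX, fromA, compT_dX, delX_const]
  · funext l
    simp [covX, fromA, compX_dX, delX_const, Pi.single_apply, ite_mul, Finset.sum_ite_eq]
  · funext f r
    simp [covX, fromA, compT_dX, compX_dX, compP_dX, delX_const,
      Pi.single_apply, ite_mul, Finset.sum_ite_eq]

lemma covP_dX_eval (N : NLC m n) (D : NLinConn m n) (b : Fin m) (j i : Fin n) (u : E m n) :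
    covP N D b j (N.dX i) u
      = (0, fun l => D.C2 l i b j u, fun f r => -(∑ l, N.N2 f r l u * D.C2 l i b j u)) := by
  refine triple_ext ?_ ?_ ?_
  · funext a
    simp [covP, fromA, compT_dX, delP_const]
  · funext l
    simp [covP, fromA, compX_dX, delP_const, Pi.single_apply, ite_mul, Finset.sum_ite_eq]
  · funext f r
    simp [covP, fromA, compT_dX, compX_dX, compP_dX, delP_const,
      Pi.single_apply, ite_mul, Finset.sum_ite_eq]

lemma covX_dP_eval (N : NLC m n) (D : NLinConn m n) (i : Fin n) (b : Fin m) (j : Fin n)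
    (u : E m n) :
    covX N D i (dPfield m n b j) u = (0, 0, fun f r => -(D.H3 f r b j i u)) := by
  refine triple_ext ?_ ?_ ?_
  · funext a
    simp [covX, fromA, compT_dP, delX_const]
  · funext l
    simp [covX, fromA, compX_dP, delX_const]
  · funext f r
    simp [covX, fromA, compT_dP, compX_dP, compP_dP, delX_const,
      ite_mul, Finset.sum_ite_eq]

lemma covP_dP_eval (N : NLC m n) (D : NLinConn m n) (b : Fin m) (j : Fin n) (a : Fin m)
    (i : Fin n) (u : E m n) :
    covP N D b j (dPfield m n a i) u = (0, 0, fun f r => -(D.C3 f r a i b j u)) := by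
  refine triple_ext ?_ ?_ ?_
  · funext c
    simp [covP, fromA, compT_dP, delP_const]
  · funext l
    simp [covP, fromA, compX_dP, delP_const]
  · funext f r
    simp [covP, fromA, compT_dP, compX_dP, compP_dP, delP_const,
      ite_mul, Finset.sum_ite_eq]

lemma covD_dX (N : NLC m n) (D : NLinConn m n) (j : Fin n) (Y : E m n → E m n) (u : E m n) :
    covD N D (N.dX j) Y u = covX N D j Y u := by
  simp [covD, compT_dX, compX_dX, compP_dX, Pi.single_apply, ite_smul,
    Finset.sum_ite_eq]

lemma covD_dP (N : NLC m n) (D : NLinConn m n) (b : Fin m) (j : Fin n) (Y : E m n → E m n)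
    (u : E m n) :
    covD N D (dPfield m n b j) Y u = covP N D b j Y u := by
  simp [covD, compT_dP, compX_dP, compP_dP, ite_smul, Finset.sum_ite_eq]

lemma lie_dX_dX (N : NLC m n) (i j : Fin n) (u : E m n)
    (h : ∀ a r k, DifferentiableAt ℝ (N.N2 a r k) u) :
    lie (N.dX j) (N.dX i) u = (0, 0, fun f r => -(N.R2 f r i j u)) := by
  unfold lie
  rw [fderiv_dX_apply N i u (fun a r => h a r i), fderiv_dX_apply N j u (fun a r => h a r j)]
  refine triple_ext (by simp) (by simp) ?_
  funext f r
  simp only [NLC.R2, NLC.delX, Prod.snd_sub, Pi.sub_apply]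
  ring

lemma lie_dP_dX (N : NLC m n) (b : Fin m) (j i : Fin n) (u : E m n)
    (h : ∀ a r k, DifferentiableAt ℝ (N.N2 a r k) u) :
    lie (dPfield m n b j) (N.dX i) u = (0, 0, fun f r => -(N.B2 f r i b j u)) := by
  unfold lie
  rw [fderiv_dX_apply N i u (fun a r => h a r i)]
  have : fderiv ℝ (dPfield m n b j) u = 0 := fderiv_const_apply _
  rw [this]
  refine triple_ext (by simp) (by simp) ?_
  funext f r
  simp [NLC.B2, delP, dPfield]

lemma lie_dP_dP (b : Fin m) (j : Fin n) (a : Fin m) (i : Fin n) (u : E m n) :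
    lie (dPfield m n b j) (dPfield m n a i) u = (0 : E m n) := by
  unfold lie
  have h1 : fderiv ℝ (dPfield m n b j) u = 0 := fderiv_const_apply _
  have h2 : fderiv ℝ (dPfield m n a i) u = 0 := fderiv_const_apply _
  rw [h1, h2]
  simp

end Aux

section Statements

open scoped BigOperators

theorem stmt12 (m n : ℕ) (U : Set (Fin m → ℝ)) (V : Set (Fin n → ℝ))
    (hU : IsOpen U) (hV : IsOpen V) (N : NLC m n) (hN : N.SmoothOn (modelSet U V))
    (D : NLinConn m n) (hD : D.SmoothOn (modelSet U V)) :
    ∀ u ∈ modelSet U V,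
      (∀ i j : Fin n,
        tors N D (N.dX j) (N.dX i) u
          = (∑ k, (D.H2 k i j u - D.H2 k j i u) • N.dX k u)
            + ∑ f, ∑ r, N.R2 f r i j u • dPnat m n f r)
      ∧ (∀ (b : Fin m) (i j : Fin n),
        tors N D (dPfield m n b j) (N.dX i) u
          = (∑ k, D.C2 k i b j u • N.dX k u)
            + ∑ f, ∑ r, (N.B2 f r i b j u + D.H3 f r b j i u) • dPnat m n f r)
      ∧ (∀ (a b : Fin m) (i j : Fin n),
        tors N D (dPfield m n b j) (dPfield m n a i) u
          = ∑ f, ∑ r, (-(D.C3 f r a i b j u - D.C3 f r b j a i u)) • dPnat m n f r) := by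
  intro u hu
  have hO : IsOpen (modelSet U V) := hU.prod (hV.prod isOpen_univ)
  have hdiff : ∀ a r k, DifferentiableAt ℝ (N.N2 a r k) u := fun a r k =>
    ((hN.2 a r k).contDiffAt (hO.mem_nhds hu)).differentiableAt (by simp)
  refine ⟨?_, ?_, ?_⟩
  · intro i j
    rw [show (∑ k, (D.H2 k i j u - D.H2 k j i u) • N.dX k u)
        = (0, fun k => D.H2 k i j u - D.H2 k j i u,
            fun f r => -(∑ k, N.N2 f r k u * (D.H2 k i j u - D.H2 k j i u))) from
      sum_dX N _ u]
    rw [show (∑ f, ∑ r, N.R2 f r i j u • dPnat m n f r)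
        = ((0 : Fin m → ℝ), 0, fun f r => N.R2 f r i j u) from sum_dP _]
    simp only [tors, covD_dX, covX_dX_eval, lie_dX_dX N i j u hdiff]
    refine triple_ext (by simp) ?_ ?_
    · funext l
      simp
    · funext f r
      simp only [Prod.snd_sub, Prod.snd_add, Pi.sub_apply, Pi.add_apply,
        Prod.fst_sub, Prod.fst_add, Prod.mk_sub_mk, Prod.mk_add_mk]
      simp [mul_sub, Finset.sum_sub_distrib]
      ring
  · intro b i j
    rw [show (∑ k, D.C2 k i b j u • N.dX k u)
        = (0, fun k => D.C2 k i b j u,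
            fun f r => -(∑ k, N.N2 f r k u * D.C2 k i b j u)) from sum_dX N _ u]
    rw [show (∑ f, ∑ r, (N.B2 f r i b j u + D.H3 f r b j i u) • dPnat m n f r)
        = ((0 : Fin m → ℝ), 0, fun f r => N.B2 f r i b j u + D.H3 f r b j i u) from
      sum_dP _]
    simp only [tors, covD_dX, covD_dP, covP_dX_eval, covX_dP_eval,
      lie_dP_dX N b j i u hdiff]
    refine triple_ext (by simp) ?_ ?_
    · funext l
      simp
    · funext f r
      simp only [Prod.snd_sub, Prod.snd_add, Pi.sub_apply, Pi.add_apply,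
        Prod.mk_sub_mk, Prod.mk_add_mk]
      simp
      ring
  · intro a b i j
    rw [show (∑ f, ∑ r, (-(D.C3 f r a i b j u - D.C3 f r b j a i u)) • dPnat m n f r)
        = ((0 : Fin m → ℝ), 0, fun f r => -(D.C3 f r a i b j u - D.C3 f r b j a i u)) from
      sum_dP _]
    simp only [tors, covD_dP, covP_dP_eval, lie_dP_dP]
    refine triple_ext (by simp) (by simp) ?_
    funext f r
    simp only [Prod.snd_sub, Pi.sub_apply, Prod.mk_sub_mk]
    simp
    ring

end Statements
end
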